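/- arXiv:2309.17041 — 7 statements merged into one kernel-verified Lean document; each statement's English description precedes it below -/
import Mathlib

section
/- Let n ≥ 2 and k ∈ 𝒢ⁿ. Then there exists a matrix Â ∈ ℤ^{(n−1)×n} such that the n×n matrix A whose first row is k and whose remaining rows are the rows of Â belongs to SL(n,ℤ) (i.e. A has integer entries and det A = 1), and moreover |Â|_∞ ≤ |k|_∞, |A|_∞ = |k|_∞, and |A^{−1}|_∞ ≤ (n−1)^{(n−1)/2}·|k|_∞^{n−1}, where |M|_∞ denotes the maximum of the absolute values of the entries of a matrix (or vector) M. -/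
/-- `ℤⁿ_*`: nonzero integer vectors whose first nonzero component is positive. -/
def ZnStar {n : ℕ} (k : Fin n → ℤ) : Prop :=
  k ≠ 0 ∧ ∀ j, (∀ i, i < j → k i = 0) → 0 ≤ k j

/-- `𝒢ⁿ`: generators of one-dimensional maximal lattices, i.e. `k ∈ ℤⁿ_*` with
`gcd (k₁, …, kₙ) = 1`. -/
def Gen {n : ℕ} (k : Fin n → ℤ) : Prop :=
  ZnStar k ∧ Finset.univ.gcd (fun i => (k i).natAbs) = 1

/-!
Induction on `n`. Write `k = (g k', c)` with `g` the gcd of the first `n - 1` entries, so that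
`k'` is primitive and `g, c` are coprime. Complete `k'` to `A'` with inverse `B'`, pick
`u g + v c = 1` with `|u| ≤ max(|c|, 1)` and `|v| ≤ max(g, 1)`, and put `A = E · diag(A', 1)`,
where `E` acts as `[[g, c], [-v, u]]` on the coordinate of the first row and the new one. Then
the first row of `A` is `k`, its entries are bounded by `|k|∞`, and `A⁻¹ = diag(B', 1) · E⁻¹` has
entries bounded by `|k|∞^(n-1)`. Negating a row other than the first makes `det A = 1`.
-/
open Matrix

theorem Int.exists_mul_add_mul_eq_one_natAbs_le {a b : ℤ} (h : IsCoprime a b) :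
    ∃ u v : ℤ, u * a + v * b = 1 ∧ u.natAbs ≤ max b.natAbs 1 ∧ v.natAbs ≤ max a.natAbs 1 := by
  rcases eq_or_ne b 0 with rfl | hb
  · have ha : a.natAbs = 1 := Int.isUnit_iff_natAbs_eq.mp (isCoprime_zero_right.mp h)
    refine ⟨a, 0, ?_, by simp [ha], by simp⟩
    rw [← Int.natAbs_mul_self' a, ha]; simp
  obtain ⟨x, y, hxy⟩ := h
  -- reduce `x` modulo `b`; then `|v b| = |1 - u a| ≤ 1 + (|b| - 1) |a|` bounds `v`
  have hu₀ := Int.emod_nonneg x hb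
  have hub : x % b < |b| := by rw [Int.abs_eq_natAbs]; exact Int.emod_lt x hb
  set u := x % b
  set v := y + x / b * a
  have huv : u * a + v * b = 1 := by linear_combination hxy + a * (Int.emod_def x b)
  refine ⟨u, v, huv, by have := Int.emod_lt x hb; omega, ?_⟩
  have hvb : |v| * |b| ≤ 1 + u * |a| := by
    rw [← abs_mul, ← abs_of_nonneg hu₀, ← abs_mul, show v * b = 1 - u * a by linear_combination huv]
    exact (abs_sub _ _).trans (by simp)
  have hua : u * |a| ≤ (|b| - 1) * |a| := mul_le_mul_of_nonneg_right (by omega) (abs_nonneg a)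
  zify
  rcases le_total |a| 1 with ha | ha
  · rw [max_eq_right ha]; nlinarith [abs_pos.mpr hb, abs_nonneg v, abs_nonneg a]
  · rw [max_eq_left ha]; nlinarith [abs_pos.mpr hb, abs_nonneg v]

section Primitive

variable {ι : Type*} [Fintype ι]

def supNatAbs (x : ι → ℤ) : ℕ := Finset.univ.sup fun i => (x i).natAbs

theorem natAbs_le_supNatAbs (x : ι → ℤ) (i : ι) : (x i).natAbs ≤ supNatAbs x :=
  Finset.le_sup (f := fun i => (x i).natAbs) (Finset.mem_univ i)

theorem supNatAbs_le {x : ι → ℤ} {K : ℕ} (h : ∀ i, (x i).natAbs ≤ K) : supNatAbs x ≤ K :=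
  Finset.sup_le fun i _ => h i

theorem one_le_supNatAbs {x : ι → ℤ} (hx : Finset.univ.gcd (fun i => (x i).natAbs) = 1) :
    1 ≤ supNatAbs x := by
  by_contra! h
  have hx0 : ∀ i ∈ Finset.univ, (x i).natAbs = 0 := fun i _ => by
    have := natAbs_le_supNatAbs x i; omega
  simp [Finset.gcd_eq_zero_iff.mpr hx0] at hx

theorem exists_primitive_eq_gcd_mul [DecidableEq ι] [Nonempty ι] (x : ι → ℤ) :
    ∃ y : ι → ℤ, (∀ i, x i = (Finset.univ.gcd fun i => (x i).natAbs : ℕ) * y i) ∧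
      Finset.univ.gcd (fun i => (y i).natAbs) = 1 ∧ ∀ i, (y i).natAbs ≤ max (x i).natAbs 1 := by
  set g := Finset.univ.gcd fun i => (x i).natAbs
  rcases eq_or_ne g 0 with hg | hg
  · obtain ⟨i₀⟩ := ‹Nonempty ι›
    have hx0 : ∀ i, x i = 0 := fun i =>
      Int.natAbs_eq_zero.mp (Finset.gcd_eq_zero_iff.mp hg i (Finset.mem_univ i))
    refine ⟨Pi.single i₀ 1, fun i => by simp [hg, hx0], ?_, fun i => ?_⟩
    · simpa using Finset.gcd_dvd (f := fun i => ((Pi.single i₀ 1 : ι → ℤ) i).natAbs)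
        (Finset.mem_univ i₀)
    · by_cases hi : i = i₀ <;> simp [hi]
  have hdvd (i : ι) : (g : ℤ) ∣ x i := Int.natCast_dvd.mpr (Finset.gcd_dvd (Finset.mem_univ i))
  have hx (i : ι) : x i = g * (x i / g) := (Int.mul_ediv_cancel' (hdvd i)).symm
  have hxabs (i : ι) : (x i).natAbs = g * (x i / g).natAbs := by
    conv_lhs => rw [hx i]
    rw [Int.natAbs_mul, Int.natAbs_natCast]
  refine ⟨fun i => x i / g, hx, ?_, fun i => le_max_of_le_left ?_⟩
  · obtain ⟨i, hi⟩ : ∃ i, (x i).natAbs ≠ 0 := by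
      by_contra! h; exact hg (Finset.gcd_eq_zero_iff.mpr fun i _ => h i)
    exact Finset.extract_gcd' _ _ ⟨i, Finset.mem_univ i, hi⟩ fun i _ => hxabs i
  · rw [hxabs]; exact Nat.le_mul_of_pos_left _ (Nat.pos_of_ne_zero hg)

theorem isCoprime_gcd_natAbs_inl {κ : Type*} [Fintype κ] {x : κ → ℤ} (e : ι ⊕ Fin 1 ≃ κ)
    (hx : Finset.univ.gcd (fun i => (x i).natAbs) = 1) :
    IsCoprime ((Finset.univ.gcd fun i => (x (e (.inl i))).natAbs : ℕ) : ℤ) (x (e (.inr 0))) := by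
  rw [Int.isCoprime_iff_gcd_eq_one, Int.gcd_eq_natAbs, Int.natAbs_natCast]
  refine Nat.dvd_one.mp ((Finset.dvd_gcd fun j _ => ?_).trans hx.dvd)
  obtain ⟨i | i, rfl⟩ := e.surjective j
  · exact (Nat.gcd_dvd_left _ _).trans (Finset.gcd_dvd (Finset.mem_univ i))
  · rw [Fin.fin_one_eq_zero i]; exact Nat.gcd_dvd_right _ _

end Primitive

section Embedding

variable {ι R : Type*} [DecidableEq ι] [CommRing R]

/-- `M` acting on the coordinates `inl p` and `inr 0`, and as the identity on all others. -/
def embedTwoByTwo (p : ι) (M : Matrix (Fin 2) (Fin 2) R) : Matrix (ι ⊕ Fin 1) (ι ⊕ Fin 1) R :=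
  fromBlocks (diagonal (Function.update 1 p (M 0 0))) (replicateCol (Fin 1) (Pi.single p (M 0 1)))
    (replicateRow (Fin 1) (Pi.single p (M 1 0))) (of fun _ _ => M 1 1)

theorem embedTwoByTwo_one (p : ι) : embedTwoByTwo p (1 : Matrix (Fin 2) (Fin 2) R) = 1 := by
  rw [embedTwoByTwo, ← fromBlocks_one]
  congr 1
  · ext i j
    by_cases hi : i = p <;> simp [hi, diagonal, one_apply, Function.update_apply]
  all_goals ext i j; simp [one_apply, Fin.fin_one_eq_zero]

theorem embedTwoByTwo_mul [Fintype ι] (p : ι) (M N : Matrix (Fin 2) (Fin 2) R) :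
    embedTwoByTwo p (M * N) = embedTwoByTwo p M * embedTwoByTwo p N := by
  rw [embedTwoByTwo, embedTwoByTwo, embedTwoByTwo, fromBlocks_multiply]
  congr 1 <;> ext i j
  · by_cases hi : i = p <;> by_cases hj : j = p <;>
      simp [hi, hj, eq_comm (a := p), mul_apply, Fin.sum_univ_two, diagonal, Function.update_apply]
  · by_cases hi : i = p <;> simp [hi, mul_apply, Fin.sum_univ_two, diagonal, Pi.single_apply]
  · by_cases hj : j = p <;> simp [hj, mul_apply, Fin.sum_univ_two, diagonal, Pi.single_apply]
  · simp [mul_apply, Fin.sum_univ_two, Pi.single_apply]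

theorem embedTwoByTwo_mul_fromBlocks [Fintype ι] (p : ι) (M : Matrix (Fin 2) (Fin 2) R)
    (A : Matrix ι ι R) :
    embedTwoByTwo p M * fromBlocks A 0 0 1 =
      fromBlocks (diagonal (Function.update 1 p (M 0 0)) * A)
        (replicateCol (Fin 1) (Pi.single p (M 0 1))) (replicateRow (Fin 1) (M 1 0 • A p))
        (of fun _ _ => M 1 1) := by
  rw [embedTwoByTwo, fromBlocks_multiply]
  congr 1 <;> ext i j <;> simp [mul_apply, Pi.single_apply]

theorem fromBlocks_mul_embedTwoByTwo [Fintype ι] (p : ι) (M : Matrix (Fin 2) (Fin 2) R)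
    (B : Matrix ι ι R) :
    fromBlocks B 0 0 1 * embedTwoByTwo p M =
      fromBlocks (B * diagonal (Function.update 1 p (M 0 0)))
        (replicateCol (Fin 1) (M 0 1 • fun i => B i p)) (replicateRow (Fin 1) (Pi.single p (M 1 0)))
        (of fun _ _ => M 1 1) := by
  rw [embedTwoByTwo, fromBlocks_multiply]
  congr 1 <;> ext i j <;> simp [mul_apply, Pi.single_apply, mul_comm]

theorem embedTwoByTwo_mul_fromBlocks_mul_eq_one [Fintype ι] (p : ι) {A B : Matrix ι ι R}
    (hAB : A * B = 1) {g c u v : R} (huv : u * g + v * c = 1) :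
    embedTwoByTwo p !![g, c; -v, u] * fromBlocks A 0 0 1 *
      (fromBlocks B 0 0 1 * embedTwoByTwo p !![u, -c; v, g]) = 1 := by
  have hAB' : fromBlocks A 0 0 1 * fromBlocks B 0 0 (1 : Matrix (Fin 1) (Fin 1) R) = 1 := by
    simp [fromBlocks_multiply, hAB]
  rw [Matrix.mul_assoc, ← Matrix.mul_assoc (fromBlocks A 0 0 1), hAB', Matrix.one_mul,
    ← embedTwoByTwo_mul, ← embedTwoByTwo_one p]
  congr 1
  ext i j
  fin_cases i <;> fin_cases j <;> simp
  · linear_combination huv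
  · ring
  · ring
  · linear_combination huv

end Embedding

section Extension

variable {ι : Type*} [DecidableEq ι]

theorem natAbs_fromBlocks_le {l m n o : Type*} {A : Matrix n l ℤ} {B : Matrix n m ℤ}
    {C : Matrix o l ℤ} {D : Matrix o m ℤ} {K : ℕ} (hA : ∀ i j, (A i j).natAbs ≤ K)
    (hB : ∀ i j, (B i j).natAbs ≤ K) (hC : ∀ i j, (C i j).natAbs ≤ K)
    (hD : ∀ i j, (D i j).natAbs ≤ K) : ∀ i j, (fromBlocks A B C D i j).natAbs ≤ K := by
  rintro (i | i) (j | j)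
  exacts [hA i j, hB i j, hC i j, hD i j]

theorem exists_mul_ne_zero_of_mul_eq_one [Fintype ι] {R : Type*} [Semiring R] [Nontrivial R]
    {A B : Matrix ι ι R} (hAB : A * B = 1) (i : ι) : ∃ t, A i t * B t i ≠ 0 := by
  have : ∑ t, A i t * B t i ≠ 0 := by simp [← mul_apply, hAB]
  obtain ⟨t, -, ht⟩ := Finset.exists_ne_zero_of_sum_ne_zero this
  exact ⟨t, ht⟩

theorem exists_bounded_extension [Fintype ι] (p : ι) {A B : Matrix ι ι ℤ} (hAB : A * B = 1)
    {g : ℕ} {c : ℤ} (hgc : IsCoprime (g : ℤ) c) {K L : ℕ} (hA : ∀ i j, (A i j).natAbs ≤ K)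
    (hgA : ∀ j, g * (A p j).natAbs ≤ K) (hc : c.natAbs ≤ K) (hK : 1 ≤ K)
    (hB : ∀ i j, (B i j).natAbs ≤ L) :
    ∃ N M : Matrix (ι ⊕ Fin 1) (ι ⊕ Fin 1) ℤ,
      N (.inl p) = Sum.elim (fun j => g * A p j) (fun _ => c) ∧ N * M = 1 ∧
      (∀ i j, (N i j).natAbs ≤ K) ∧ ∀ i j, (M i j).natAbs ≤ K * L := by
  obtain ⟨u, v, huv, hu, hv⟩ := Int.exists_mul_add_mul_eq_one_natAbs_le hgc
  obtain ⟨t, ht⟩ := exists_mul_ne_zero_of_mul_eq_one hAB p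
  have hL : 1 ≤ L := (Int.natAbs_pos.mpr (right_ne_zero_of_mul ht)).trans_le (hB t p)
  have hg : g ≤ K :=
    (Nat.le_mul_of_pos_right g (Int.natAbs_pos.mpr (left_ne_zero_of_mul ht))).trans (hgA t)
  have hu' : u.natAbs ≤ K := hu.trans (max_le hc hK)
  have hv' : ∀ j, (v * A p j).natAbs ≤ K := fun j => by
    rw [Int.natAbs_mul]
    refine (Nat.mul_le_mul_right _ hv).trans ?_
    rw [Int.natAbs_natCast, max_mul_of_nonneg _ _ (Nat.zero_le _), one_mul]
    exact max_le (hgA j) (hA p j)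
  refine ⟨embedTwoByTwo p !![(g : ℤ), c; -v, u] * fromBlocks A 0 0 1,
    fromBlocks B 0 0 1 * embedTwoByTwo p !![u, -c; v, (g : ℤ)], ?_, ?_, ?_, ?_⟩
  · rw [embedTwoByTwo_mul_fromBlocks]
    ext (j | j) <;> simp
  · exact embedTwoByTwo_mul_fromBlocks_mul_eq_one p hAB huv
  · rw [embedTwoByTwo_mul_fromBlocks]
    refine natAbs_fromBlocks_le (fun i j => ?_) (fun i j => ?_) (fun i j => ?_)
      (fun _ _ => by simpa using hu')
    · by_cases hi : i = p
      · simpa [hi, Int.natAbs_mul] using hgA j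
      · simpa [hi] using hA i j
    · by_cases hi : i = p
      · simpa [hi] using hc
      · simp [hi]
    · simpa using hv' j
  · rw [fromBlocks_mul_embedTwoByTwo]
    refine natAbs_fromBlocks_le (fun i j => ?_) (fun i j => ?_) (fun i j => ?_)
      (fun _ _ => by simpa using hg.trans (Nat.le_mul_of_pos_right K hL))
    · by_cases hj : j = p
      · simpa [hj, Int.natAbs_mul, mul_comm] using Nat.mul_le_mul hu' (hB i p)
      · simpa [hj] using (hB i j).trans (Nat.le_mul_of_pos_left L hK)
    · simpa [Int.natAbs_mul] using Nat.mul_le_mul hc (hB i p)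
    · by_cases hj : j = p
      · simpa [hj] using hv.trans (max_le hg hK) |>.trans (Nat.le_mul_of_pos_right K hL)
      · simp [hj]

end Extension

structure IsBoundedCompletion {n : ℕ} (k : Fin (n + 1) → ℤ)
    (A B : Matrix (Fin (n + 1)) (Fin (n + 1)) ℤ) : Prop where
  row_zero : A 0 = k
  mul_eq_one : A * B = 1
  natAbs_le : ∀ i j, (A i j).natAbs ≤ supNatAbs k
  natAbs_inv_le : ∀ i j, (B i j).natAbs ≤ supNatAbs k ^ n

theorem exists_isBoundedCompletion_zero (k : Fin 1 → ℤ)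
    (hk : Finset.univ.gcd (fun i => (k i).natAbs) = 1) :
    ∃ A B, IsBoundedCompletion k A B := by
  have hk0 : (k 0).natAbs = 1 := by simpa using hk
  refine ⟨of fun _ _ => k 0, of fun _ _ => k 0, ⟨?_, ?_, fun _ _ => natAbs_le_supNatAbs k 0, ?_⟩⟩
  · ext j; simp [Fin.fin_one_eq_zero j]
  · ext i j
    rw [Fin.fin_one_eq_zero i, Fin.fin_one_eq_zero j]
    simp [mul_apply, ← Int.natAbs_mul_self', hk0]
  · simp [hk0]

theorem exists_isBoundedCompletion_succ {n : ℕ}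
    (ih : ∀ k : Fin (n + 1) → ℤ, Finset.univ.gcd (fun i => (k i).natAbs) = 1 →
      ∃ A B, IsBoundedCompletion k A B)
    (k : Fin (n + 2) → ℤ) (hk : Finset.univ.gcd (fun i => (k i).natAbs) = 1) :
    ∃ A B, IsBoundedCompletion k A B := by
  let e : Fin (n + 1) ⊕ Fin 1 ≃ Fin (n + 2) := finSumFinEquiv
  set K := supNatAbs k
  set g := Finset.univ.gcd fun i => (k (e (.inl i))).natAbs
  have hK : 1 ≤ K := one_le_supNatAbs hk
  obtain ⟨k', hkk', hk', hk'K⟩ := exists_primitive_eq_gcd_mul fun i => k (e (.inl i))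
  obtain ⟨A', B', hA'0, hAB', hA', hB'⟩ := ih k' hk'
  have hK' : supNatAbs k' ≤ K :=
    supNatAbs_le fun i => (hk'K i).trans (max_le (natAbs_le_supNatAbs k _) hK)
  have hgk' (j) : g * (k' j).natAbs ≤ K := by
    rw [← Int.natAbs_natCast g, ← Int.natAbs_mul, ← hkk']
    exact natAbs_le_supNatAbs k _
  obtain ⟨N, M, hN0, hNM, hN, hM⟩ := exists_bounded_extension 0 hAB'
    (isCoprime_gcd_natAbs_inl e hk) (fun i j => (hA' i j).trans hK') (hA'0 ▸ hgk')
    (natAbs_le_supNatAbs k _) hK hB'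
  refine ⟨reindexAlgEquiv ℤ ℤ e N, reindexAlgEquiv ℤ ℤ e M, ⟨?_, by rw [← map_mul, hNM, map_one],
    fun i j => hN _ _, fun i j => (hM _ _).trans ?_⟩⟩
  · have he0 : e.symm 0 = .inl 0 := finSumFinEquiv_symm_apply_castAdd 0
    ext j
    obtain ⟨j | j, rfl⟩ := e.surjective j
    · simpa [he0, hN0, hA'0] using (hkk' j).symm
    · simp [he0, hN0, Fin.fin_one_eq_zero j]
  · rw [pow_succ']
    exact Nat.mul_le_mul_left K (Nat.pow_le_pow_left hK' n)

theorem exists_isBoundedCompletion (n : ℕ) (k : Fin (n + 1) → ℤ)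
    (hk : Finset.univ.gcd (fun i => (k i).natAbs) = 1) : ∃ A B, IsBoundedCompletion k A B := by
  induction n with
  | zero => exact exists_isBoundedCompletion_zero k hk
  | succ n ih => exact exists_isBoundedCompletion_succ ih k hk

theorem exists_det_eq_one_of_mul_eq_one {ι : Type*} [Fintype ι] [DecidableEq ι]
    {A B : Matrix ι ι ℤ} (hAB : A * B = 1) {p q : ι} (hpq : p ≠ q) :
    ∃ A' B' : Matrix ι ι ℤ, A' p = A p ∧ A'.det = 1 ∧ A' * B' = 1 ∧
      (∀ i j, (A' i j).natAbs = (A i j).natAbs) ∧ ∀ i j, (B' i j).natAbs = (B i j).natAbs := by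
  have hdet : A.det * B.det = 1 := by rw [← det_mul, hAB, det_one]
  rcases Int.eq_one_or_neg_one_of_mul_eq_one hdet with h | h
  · exact ⟨A, B, rfl, h, hAB, fun _ _ => rfl, fun _ _ => rfl⟩
  set d : ι → ℤ := Function.update 1 q (-1)
  have hd (i : ι) : (d i).natAbs = 1 := by by_cases hi : i = q <;> simp [d, hi]
  have hdd : diagonal d * diagonal d = 1 := by
    rw [diagonal_mul_diagonal, ← diagonal_one]
    congr 1; ext i; by_cases hi : i = q <;> simp [d, hi]
  refine ⟨diagonal d * A, B * diagonal d, ?_, ?_, ?_, fun i j => ?_, fun i j => ?_⟩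
  · ext j; simp [d, hpq]
  · rw [det_mul, det_diagonal, Finset.prod_update_of_mem (Finset.mem_univ q), h]; simp
  · rw [Matrix.mul_assoc, ← Matrix.mul_assoc A, hAB, Matrix.one_mul, hdd]
  · simp [Int.natAbs_mul, hd]
  · simp [Int.natAbs_mul, hd]

/-- For `n ≥ 2` (written `n = m + 2`) and `k ∈ 𝒢ⁿ` there is an integer matrix
`A` whose first row is `k` (the remaining rows forming the matrix `Â ∈ ℤ^{(n−1)×n}`), with
`det A = 1` (so `A ∈ SL(n,ℤ)`), `|Â|_∞ ≤ |k|_∞`, `|A|_∞ = |k|_∞`, and whose (integer) inverse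
`B` satisfies `|A⁻¹|_∞ = |B|_∞ ≤ (n−1)^{(n−1)/2}·|k|_∞^{n−1}`. -/
theorem bezout_matrix_exists {m : ℕ} (k : Fin (m + 2) → ℤ) (hk : Gen k) :
    ∃ A : Matrix (Fin (m + 2)) (Fin (m + 2)) ℤ,
      (∀ j, A 0 j = k j) ∧
      A.det = 1 ∧
      (∀ i, i ≠ (0 : Fin (m + 2)) → ∀ j,
        (A i j).natAbs ≤ Finset.univ.sup fun i' => (k i').natAbs) ∧
      ((Finset.univ.sup fun i => Finset.univ.sup fun j => (A i j).natAbs)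
        = Finset.univ.sup fun i' => (k i').natAbs) ∧
      ∃ B : Matrix (Fin (m + 2)) (Fin (m + 2)) ℤ, A * B = 1 ∧ B * A = 1 ∧
        ∀ i j, |(B i j : ℝ)| ≤
          (((m : ℝ) + 2) - 1) ^ ((((m : ℝ) + 2) - 1) / 2) *
            ((Finset.univ.sup fun i' => (k i').natAbs : ℕ) : ℝ) ^ (m + 1) := by
  obtain ⟨A₀, B₀, hA₀0, hAB₀, hA₀, hB₀⟩ := exists_isBoundedCompletion (m + 1) k hk.2
  obtain ⟨A, B, hA0, hdet, hAB, hA, hB⟩ :=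
    exists_det_eq_one_of_mul_eq_one hAB₀ (p := 0) (q := 1) zero_ne_one
  have hAK (i j) : (A i j).natAbs ≤ supNatAbs k := (hA i j).trans_le (hA₀ i j)
  have hA0k : A 0 = k := hA0.trans hA₀0
  refine ⟨A, fun j => by rw [hA0k], hdet, fun i _ j => hAK i j, ?_, B, hAB,
    mul_eq_one_comm.mp hAB, fun i j => ?_⟩
  · refine le_antisymm (Finset.sup_le fun i _ => supNatAbs_le (hAK i)) (supNatAbs_le fun j => ?_)
    rw [← hA0k]
    exact Finset.le_sup_of_le (Finset.mem_univ 0) (natAbs_le_supNatAbs (A 0) j)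
  · have hC : (1 : ℝ) ≤ ((m : ℝ) + 2 - 1) ^ (((m : ℝ) + 2 - 1) / 2) :=
      Real.one_le_rpow (by linarith [m.cast_nonneg (α := ℝ)])
        (div_nonneg (by linarith [m.cast_nonneg (α := ℝ)]) zero_le_two)
    calc |(B i j : ℝ)| = ((B i j).natAbs : ℝ) := by rw [Nat.cast_natAbs, Int.cast_abs]
      _ ≤ (supNatAbs k : ℝ) ^ (m + 1) := by exact_mod_cast (hB i j).trans_le (hB₀ i j)
      _ ≤ _ := le_mul_of_one_le_left (by positivity) hC
end

section
/- Let n ≥ 2, s > 0, 0 < δ ≤ 1, and let f ∈ 𝔹ⁿ_s satisfy |f_k| ≥ δ·|k|₁^{−n}·e^{−|k|₁ s} for every k ∈ 𝒢ⁿ with |k|₁ ≥ N(δ;s,n). Then for every k ∈ 𝒢ⁿ with |k|₁ ≥ N(δ;s,n) there exists θ_k ∈ [0,2π) (with e^{iθ_k} = f_k/|f_k|) such that π_{ℤk}f(θ) = 2|f_k|·(cos(θ+θ_k) + F*_k(θ)), where F*_k(θ) := (1/(2|f_k|))·Σ_{j∈ℤ, |j|≥2} f_{jk} e^{i j θ};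 moreover F*_k extends holomorphically to the complex strip {θ ∈ ℂ : |Im θ| < 1} and sup_{|Im θ|<1} |F*_k(θ)| ≤ 2^{−40}. -/
open scoped Real

noncomputable section

/-- `|k|₁ := ∑ᵢ |kᵢ|`, as a real number. -/
def norm1 {n : ℕ} (k : Fin n → ℤ) : ℝ := ∑ i, |(k i : ℝ)|

/-- Membership `f ∈ 𝔹ⁿ_s` for a zero-average real analytic function on `𝕋ⁿ` described by its
Fourier coefficients `c : ℤⁿ → ℂ`:  `‖f‖_s := sup_k |c k| e^{|k|₁ s} ≤ 1`. -/
def InUnitBallAnalytic {n : ℕ} (s : ℝ) (c : (Fin n → ℤ) → ℂ) : Prop :=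
  ∀ k, ‖c k‖ * Real.exp (s * norm1 k) ≤ 1

/-- The one-dimensional Fourier projection `π_{ℤk} f (θ) := ∑_{j ∈ ℤ} f_{jk} e^{i j θ}`
of the function with Fourier coefficients `c`. -/
def piK {n : ℕ} (c : (Fin n → ℤ) → ℂ) (k : Fin n → ℤ) : ℝ → ℝ :=
  fun θ => (∑' j : ℤ, c (j • k) * Complex.exp (Complex.I * (j : ℂ) * (θ : ℂ))).re

/-- The cut-off function `N(δ; s, n) := 2·max{1, (1/s)·log(cₙ/(sⁿδ))}`,
`cₙ := 2⁴⁴·(2n/e)ⁿ`. -/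
def cutoffN (n : ℕ) (s δ : ℝ) : ℝ :=
  2 * max 1 ((1 / s) * Real.log ((2 ^ 44 * (2 * n / Real.exp 1) ^ n) / (s ^ n * δ)))

/-- The tail `F*_k(z) := (1/(2|f_k|))·∑_{|j| ≥ 2} f_{jk} e^{i j z}`, as a function of a complex
variable `z`. -/
def Fstar {n : ℕ} (c : (Fin n → ℤ) → ℂ) (k : Fin n → ℤ) : ℂ → ℂ :=
  fun z => (1 / (2 * (‖c k‖ : ℂ))) *
    ∑' j : ℤ, if 2 ≤ |j| then c (j • k) * Complex.exp (Complex.I * (j : ℂ) * z) else 0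

/-!
Write `t = s|k|₁` and `a_j = f_{jk}`. The analytic norm gives `|a_j| ≤ e^{-t|j|}`, so on the strip
`|Im z| ≤ 1` the harmonic `a_j e^{ijz}` is dominated by `r^{|j|}` with `r = e^{1-t} ≤ 1/2`: the
tail over `|j| ≥ 2` converges uniformly there, hence is holomorphic, and is at most
`2r²/(1-r) ≤ 4r²`. The cutoff `|k|₁ ≥ N(δ;s,n)` gives `t ≥ 2` and `e^{t/2} ≥ cₙ/(sⁿδ)`; together
with `tⁿ e^{-t/2} ≤ (2n/e)ⁿ` this makes `4r²` at most `2^{-39} δ e^{-t} |k|₁^{-n} ≤ 2^{-39} |f_k|`.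
Since `f` is real, `a_{-j} = conj a_j`: the harmonics `j = ±1` add up to `2|f_k| cos(θ + θ_k)`,
and the tail is real on `ℝ`.
-/

open Complex ComplexConjugate

namespace Real

theorem pow_mul_exp_neg_half_le {x : ℝ} (hx : 0 ≤ x) {n : ℕ} (hn : n ≠ 0) :
    x ^ n * exp (-(x / 2)) ≤ (2 * n / exp 1) ^ n := by
  have hn' : (0 : ℝ) < n := by positivity
  have h := pow_le_pow_left₀ (by positivity) (mul_exp_neg_le_exp_neg_one (x / (2 * n))) n
  rw [mul_pow, ← exp_nat_mul, ← exp_nat_mul] at h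
  calc x ^ n * exp (-(x / 2))
      = (2 * n) ^ n * ((x / (2 * n)) ^ n * exp (n * -(x / (2 * n)))) := by
        rw [div_pow, ← mul_assoc, mul_div_cancel₀ _ (by positivity)]
        congr 2; field_simp
    _ ≤ (2 * n) ^ n * exp (n * -1) := by gcongr
    _ = (2 * n / exp 1) ^ n := by
        rw [div_pow, ← exp_nat_mul, mul_neg_one, exp_neg, div_eq_mul_inv, mul_one]

end Real

theorem two_mul_sq_div_one_sub_le {r : ℝ} (hr : r ≤ 1 / 2) :
    2 * (r ^ 2 / (1 - r)) ≤ 4 * r ^ 2 := by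
  rw [div_eq_mul_inv]
  have : (1 - r)⁻¹ ≤ 2 := inv_le_of_inv_le₀ (by norm_num) (by linarith)
  nlinarith [sq_nonneg r]

theorem hasSum_ite_two_le_abs_pow {r : ℝ} (hr0 : 0 ≤ r) (hr1 : r < 1) :
    HasSum (fun j : ℤ => if 2 ≤ |j| then r ^ j.natAbs else 0) (2 * (r ^ 2 / (1 - r))) := by
  have hnat : HasSum (fun m : ℕ => if 2 ≤ m then r ^ m else 0) (r ^ 2 / (1 - r)) := by
    rw [← hasSum_nat_add_iff' 2]
    simp only [Finset.sum_range_succ, Finset.sum_range_zero]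
    norm_num [pow_add, mul_comm _ (r ^ 2), div_eq_mul_inv]
    exact (hasSum_geometric_of_lt_one hr0 hr1).mul_left (r ^ 2)
  have hpos : HasSum (fun m : ℕ => if 2 ≤ |(m : ℤ)| then r ^ (m : ℤ).natAbs else 0)
      (r ^ 2 / (1 - r)) := by
    refine hnat.congr_fun fun m => ?_
    simp only [Nat.abs_cast, Int.natAbs_natCast, Nat.ofNat_le_cast]
  have hneg : HasSum (fun m : ℕ => if 2 ≤ |(-m : ℤ)| then r ^ (-m : ℤ).natAbs else 0)
      (r ^ 2 / (1 - r)) := by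
    refine hnat.congr_fun fun m => ?_
    simp only [abs_neg, Int.natAbs_neg, Nat.abs_cast, Int.natAbs_natCast, Nat.ofNat_le_cast]
  have := hpos.of_nat_of_neg (f := fun j : ℤ => if 2 ≤ |j| then r ^ j.natAbs else 0) hneg
  rwa [if_neg (by decide), sub_zero, ← two_mul] at this

theorem Complex.norm_mul_exp_I_mul_le_exp_pow {w z : ℂ} {t : ℝ} {j : ℤ}
    (hw : ‖w‖ ≤ Real.exp (-(t * |(j : ℝ)|))) (hz : |z.im| ≤ 1) :
    ‖w * exp (I * j * z)‖ ≤ Real.exp (1 - t) ^ j.natAbs := by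
  have hre : -(t * |(j : ℝ)|) + (I * j * z).re ≤ j.natAbs * (1 - t) := by
    have : (I * j * z).re = -(j * z.im) := by simp [mul_re, mul_im]
    rw [this, Nat.cast_natAbs, Int.cast_abs]
    nlinarith [neg_abs_le ((j : ℝ) * z.im), abs_mul (j : ℝ) z.im, abs_nonneg (j : ℝ)]
  calc ‖w * exp (I * j * z)‖ ≤ Real.exp (-(t * |(j : ℝ)|)) * Real.exp (I * j * z).re := by
        rw [norm_mul, norm_exp]; gcongr
    _ ≤ Real.exp (1 - t) ^ j.natAbs := by
        rw [← Real.exp_add, ← Real.exp_nat_mul]; exact Real.exp_le_exp.2 hre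

theorem Complex.exists_mem_Ico_exp_I_mul_eq_div_norm {w : ℂ} (hw : w ≠ 0) :
    ∃ θ ∈ Set.Ico 0 (2 * π), exp (I * θ) = w / ‖w‖ := by
  refine ⟨toIcoMod Real.two_pi_pos 0 (arg w), toIcoMod_mem_Ico' _ _, ?_⟩
  rw [← self_sub_toIcoDiv_zsmul, zsmul_eq_mul, eq_div_iff (by simpa using hw)]
  push_cast
  rw [show I * (arg w - toIcoDiv Real.two_pi_pos 0 (arg w) * (2 * π)) =
      arg w * I - toIcoDiv Real.two_pi_pos 0 (arg w) * (2 * π * I) by ring,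
    exp_sub, exp_int_mul_two_pi_mul_I, div_one, mul_comm]
  exact norm_mul_exp_arg_mul_I w

def fourierTailTerm (a : ℤ → ℂ) (z : ℂ) (j : ℤ) : ℂ :=
  if 2 ≤ |j| then a j * exp (I * j * z) else 0

def fourierTail (a : ℤ → ℂ) (z : ℂ) : ℂ := ∑' j, fourierTailTerm a z j

section

variable {a : ℤ → ℂ} {t : ℝ}

theorem norm_fourierTailTerm_le (ha : ∀ j : ℤ, ‖a j‖ ≤ Real.exp (-(t * |(j : ℝ)|))) {z : ℂ}
    (hz : |z.im| ≤ 1) (j : ℤ) :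
    ‖fourierTailTerm a z j‖ ≤ if 2 ≤ |j| then Real.exp (1 - t) ^ j.natAbs else 0 := by
  unfold fourierTailTerm
  split_ifs
  · exact norm_mul_exp_I_mul_le_exp_pow (ha j) hz
  · exact norm_zero.le

theorem summable_fourierTailTerm (ha : ∀ j : ℤ, ‖a j‖ ≤ Real.exp (-(t * |(j : ℝ)|))) (ht : 1 < t)
    {z : ℂ} (hz : |z.im| ≤ 1) : Summable (fourierTailTerm a z) :=
  .of_norm_bounded (hasSum_ite_two_le_abs_pow (Real.exp_pos _).le
    (Real.exp_lt_one_iff.2 (by linarith))).summable (norm_fourierTailTerm_le ha hz)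

theorem norm_fourierTail_le (ha : ∀ j : ℤ, ‖a j‖ ≤ Real.exp (-(t * |(j : ℝ)|))) (ht : 1 < t)
    {z : ℂ} (hz : |z.im| ≤ 1) :
    ‖fourierTail a z‖ ≤ 2 * (Real.exp (1 - t) ^ 2 / (1 - Real.exp (1 - t))) :=
  tsum_of_norm_bounded (hasSum_ite_two_le_abs_pow (Real.exp_pos _).le
    (Real.exp_lt_one_iff.2 (by linarith))) (norm_fourierTailTerm_le ha hz)

theorem differentiableOn_fourierTail (ha : ∀ j : ℤ, ‖a j‖ ≤ Real.exp (-(t * |(j : ℝ)|)))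
    (ht : 1 < t) : DifferentiableOn ℂ (fourierTail a) {z : ℂ | |z.im| < 1} := by
  have hM := hasSum_ite_two_le_abs_pow (Real.exp_pos (1 - t)).le
    (Real.exp_lt_one_iff.2 (by linarith))
  have hopen : IsOpen {z : ℂ | |z.im| < 1} :=
    isOpen_lt (continuous_abs.comp continuous_im) continuous_const
  refine differentiableOn_tsum_of_summable_norm hM.summable (fun j => ?_) hopen
    fun j z hz => norm_fourierTailTerm_le ha (le_of_lt hz) j
  unfold fourierTailTerm
  split_ifs
  · exact (((differentiable_id.const_mul _).cexp).const_mul _).differentiableOn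
  · exact differentiableOn_const 0

theorem tsum_mul_exp_I_mul_eq_add_fourierTail {z : ℂ} (hsum : Summable (fourierTailTerm a z)) :
    ∑' j : ℤ, a j * exp (I * j * z) =
      a (-1) * exp (-(I * z)) + a 0 + a 1 * exp (I * z) + fourierTail a z := by
  set f : ℤ → ℂ := fun j => a j * exp (I * j * z)
  set low : Finset ℤ := {-1, 0, 1}
  have hlow : ∀ j, j ∈ low ↔ ¬ 2 ≤ |j| := by
    intro j; simp only [low, Finset.mem_insert, Finset.mem_singleton, not_le, abs_lt]; omega
  have hsplit : f = fun j => (low : Set ℤ).indicator f j + fourierTailTerm a z j := by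
    ext j
    by_cases hj : j ∈ low
    · simp [Set.indicator_of_mem (Finset.mem_coe.2 hj), fourierTailTerm, (hlow j).1 hj]
    · simp [Set.indicator_of_notMem (mt Finset.mem_coe.1 hj), fourierTailTerm,
        not_not.1 (mt (hlow j).2 hj), f]
  rw [hsplit, Summable.tsum_add _ hsum, ← sum_eq_tsum_indicator]
  · simp [low, f, Finset.sum_insert, fourierTail, add_assoc]
  · exact summable_of_ne_finset_zero fun j hj => Set.indicator_of_notMem (mt Finset.mem_coe.1 hj) f

theorem conj_mul_exp_I_mul_ofReal (hsym : ∀ j, a (-j) = conj (a j)) (j : ℤ) (x : ℝ) :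
    conj (a j * exp (I * j * x)) = a (-j) * exp (I * ((-j : ℤ) : ℂ) * x) := by
  rw [map_mul, ← exp_conj, hsym]
  congr 2
  simp only [map_mul, conj_I, conj_ofReal, map_intCast, Int.cast_neg]
  ring

theorem im_fourierTail_ofReal (hsym : ∀ j, a (-j) = conj (a j)) (x : ℝ) :
    (fourierTail a x).im = 0 := by
  refine conj_eq_iff_im.mp ?_
  have hterm : ∀ j, conj (fourierTailTerm a x j) = fourierTailTerm a x (-j) := by
    intro j
    simp only [fourierTailTerm, abs_neg, apply_ite conj, map_zero, conj_mul_exp_I_mul_ofReal hsym]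
  calc conj (fourierTail a x) = ∑' j, fourierTailTerm a x (-j) := by
        simp only [fourierTail, ← hterm]; exact tsum_star
    _ = fourierTail a x := (Equiv.neg ℤ).tsum_eq (fourierTailTerm a x)

theorem re_tsum_mul_exp_I_mul_ofReal (hsym : ∀ j, a (-j) = conj (a j)) (h0 : a 0 = 0)
    {A φ : ℝ} (h1 : a 1 = A * exp (I * φ)) {x : ℝ} (hsum : Summable (fourierTailTerm a x)) :
    (∑' j : ℤ, a j * exp (I * j * x)).re = 2 * A * Real.cos (x + φ) + (fourierTail a x).re := by
  have hconj : a (-1) * exp (-(I * x)) = conj (a 1 * exp (I * x)) := by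
    simpa using (conj_mul_exp_I_mul_ofReal hsym 1 x).symm
  have hcos : (a 1 * exp (I * x)).re = A * Real.cos (x + φ) := by
    rw [h1, mul_assoc, ← exp_add, show I * φ + I * x = (x + φ : ℝ) * I by push_cast; ring,
      re_ofReal_mul, exp_ofReal_mul_I_re]
  rw [tsum_mul_exp_I_mul_eq_add_fourierTail hsum, h0, hconj]
  simp only [add_re, conj_re, zero_re, hcos]
  ring

end

theorem norm1_smul {n : ℕ} (j : ℤ) (k : Fin n → ℤ) : norm1 (j • k) = |(j : ℝ)| * norm1 k := by
  simp only [norm1, Pi.smul_apply, smul_eq_mul, Int.cast_mul, abs_mul, ← Finset.mul_sum]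

theorem InUnitBallAnalytic.norm_apply_smul_le {n : ℕ} {s : ℝ} {c : (Fin n → ℤ) → ℂ}
    (hc : InUnitBallAnalytic s c) (k : Fin n → ℤ) (j : ℤ) :
    ‖c (j • k)‖ ≤ Real.exp (-(s * norm1 k * |(j : ℝ)|)) := by
  have := hc (j • k)
  rwa [norm1_smul, mul_left_comm, mul_comm |(j : ℝ)|, ← le_div_iff₀ (Real.exp_pos _), one_div,
    ← Real.exp_neg] at this

theorem Fstar_eq_ofReal_mul_fourierTail {n : ℕ} (c : (Fin n → ℤ) → ℂ) (k : Fin n → ℤ) (z : ℂ) :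
    Fstar c k z = ((2 * ‖c k‖)⁻¹ : ℝ) * fourierTail (fun j => c (j • k)) z := by
  simp [Fstar, fourierTail, fourierTailTerm]

theorem two_pow_mul_le_exp_of_cutoffN_le {n : ℕ} {s δ K : ℝ} (hs : 0 < s) (hδ : 0 < δ)
    (h : cutoffN n s δ ≤ K) :
    2 ^ 44 * (2 * n / Real.exp 1) ^ n ≤ Real.exp (s * K / 2) * (s ^ n * δ) := by
  set X := 2 ^ 44 * (2 * n / Real.exp 1) ^ n / (s ^ n * δ)
  have hlog : Real.log X ≤ s * K / 2 := by
    have := (le_max_right _ _).trans (le_of_mul_le_mul_left (h.trans_eq (by ring) :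
      2 * max 1 ((1 / s) * Real.log X) ≤ 2 * (K / 2)) two_pos)
    rw [one_div_mul_eq_div, div_le_iff₀' hs] at this
    rwa [mul_div_assoc]
  rw [← div_le_iff₀ (by positivity)]
  exact (Real.le_exp_log X).trans (Real.exp_le_exp.2 hlog)

theorem two_le_mul_of_cutoffN_le {n : ℕ} (hn : 2 ≤ n) {s δ K : ℝ} (hs : 0 < s) (hδ0 : 0 < δ)
    (hδ1 : δ ≤ 1) (h : cutoffN n s δ ≤ K) : 2 ≤ s * K := by
  rcases le_or_gt 1 s with hs1 | hs1
  · have hK : 2 * 1 ≤ K := (mul_le_mul_of_nonneg_left (le_max_left _ _) zero_le_two).trans h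
    nlinarith
  have hbase : 1 ≤ (2 * n / Real.exp 1) ^ n := by
    refine one_le_pow₀ ((one_le_div (Real.exp_pos 1)).2 ?_)
    have : (2 : ℝ) ≤ n := by exact_mod_cast hn
    linarith [Real.exp_one_lt_d9]
  have hsδ : s ^ n * δ ≤ 1 := mul_le_one₀ (pow_le_one₀ hs.le hs1.le) hδ0.le hδ1
  have h44 : (2 : ℝ) ^ 44 ≤ Real.exp (s * K / 2) := by
    nlinarith [two_pow_mul_le_exp_of_cutoffN_le hs hδ0 h, Real.exp_pos (s * K / 2)]
  have h1 : Real.exp 1 ≤ Real.exp (s * K / 2) := by linarith [Real.exp_one_lt_d9]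
  linarith [Real.exp_le_exp.1 h1]

theorem four_mul_exp_sq_le {n : ℕ} (hn : n ≠ 0) {s δ K : ℝ} (hs : 0 < s) (hK : 0 < K)
    (h : 2 ^ 44 * (2 * n / Real.exp 1) ^ n ≤ Real.exp (s * K / 2) * (s ^ n * δ)) :
    4 * Real.exp (1 - s * K) ^ 2 ≤ 2⁻¹ ^ 39 * (δ * Real.exp (-K * s) / K ^ n) := by
  set t := s * K with ht
  have hsδ : 0 < s ^ n * δ := pos_of_mul_pos_right
    ((by positivity : (0 : ℝ) < 2 ^ 44 * (2 * n / Real.exp 1) ^ n).trans_le h) (by positivity)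
  have he2 : Real.exp 2 ≤ 8 := by
    have := Real.exp_one_lt_d9
    rw [show (2 : ℝ) = 1 + 1 by norm_num, Real.exp_add]; nlinarith [Real.exp_pos 1]
  have hpow := Real.pow_mul_exp_neg_half_le (by positivity : 0 ≤ t) hn
  have hKn : K ^ n = t ^ n / s ^ n := by rw [ht, mul_pow]; field_simp
  rw [hKn, show -K * s = -t by rw [ht]; ring, div_div_eq_mul_div, ← mul_div_assoc,
    le_div_iff₀ (by positivity)]
  have hsq : Real.exp (1 - t) ^ 2 =
      Real.exp 2 * Real.exp (-t) * Real.exp (-(t / 2)) * Real.exp (-(t / 2)) := by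
    rw [← Real.exp_nat_mul, ← Real.exp_add, ← Real.exp_add, ← Real.exp_add]; ring_nf
  have hX : (2 * n / Real.exp 1) ^ n ≤ 2⁻¹ ^ 44 * (Real.exp (t / 2) * (s ^ n * δ)) := by
    rwa [inv_pow, ← div_eq_inv_mul, le_div_iff₀' (by positivity)]
  have hcancel : Real.exp (-(t / 2)) * Real.exp (t / 2) = 1 := by
    rw [← Real.exp_add, neg_add_cancel, Real.exp_zero]
  calc 4 * Real.exp (1 - t) ^ 2 * t ^ n
      = 4 * Real.exp 2 * Real.exp (-t) * Real.exp (-(t / 2)) * (t ^ n * Real.exp (-(t / 2))) := by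
        rw [hsq]; ring
    _ ≤ 4 * Real.exp 2 * Real.exp (-t) * Real.exp (-(t / 2)) *
          (2⁻¹ ^ 44 * (Real.exp (t / 2) * (s ^ n * δ))) :=
        mul_le_mul_of_nonneg_left (hpow.trans hX) (by positivity)
    _ = 2⁻¹ ^ 42 * Real.exp 2 * (Real.exp (-t) * (s ^ n * δ)) := by
        linear_combination (4 * Real.exp 2 * Real.exp (-t) * 2⁻¹ ^ 44 * (s ^ n * δ)) * hcancel
    _ ≤ 2⁻¹ ^ 42 * 8 * (Real.exp (-t) * (s ^ n * δ)) := by gcongr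
    _ = 2⁻¹ ^ 39 * (δ * Real.exp (-t) * s ^ n) := by ring

theorem two_mul_exp_sq_div_le_of_cutoffN_le {n : ℕ} (hn : 2 ≤ n) {s δ K : ℝ} (hs : 0 < s)
    (hδ0 : 0 < δ) (hδ1 : δ ≤ 1) (h : cutoffN n s δ ≤ K) :
    2 * (Real.exp (1 - s * K) ^ 2 / (1 - Real.exp (1 - s * K))) ≤
      2⁻¹ ^ 39 * (δ * Real.exp (-K * s) / K ^ n) := by
  have ht := two_le_mul_of_cutoffN_le hn hs hδ0 hδ1 h
  have hr : Real.exp (1 - s * K) ≤ 1 / 2 :=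
    (Real.exp_le_exp.2 (by linarith)).trans Real.exp_neg_one_lt_half.le
  exact (two_mul_sq_div_one_sub_le hr).trans <| four_mul_exp_sq_le (by omega) hs
    (pos_of_mul_pos_right (two_pos.trans_le ht) hs.le) (two_pow_mul_le_exp_of_cutoffN_le hs hδ0 h)

/-- If `f ∈ 𝔹ⁿ_s` satisfies `|f_k| ≥ δ |k|₁^{−n} e^{−|k|₁ s}` for all
`k ∈ 𝒢ⁿ` with `|k|₁ ≥ N(δ;s,n)`, then for every such `k` there is `θ_k ∈ [0, 2π)` with
`e^{iθ_k} = f_k/|f_k|` such that `π_{ℤk} f (θ) = 2|f_k|(cos(θ+θ_k) + F*_k(θ))`; moreover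
`F*_k` is real on `ℝ`, extends holomorphically to the strip `|Im z| < 1`, and is bounded there
by `2^{−40}`. -/
theorem cosine_like_projection {n : ℕ} (hn : 2 ≤ n) (s δ : ℝ) (hs : 0 < s)
    (hδ0 : 0 < δ) (hδ1 : δ ≤ 1)
    (c : (Fin n → ℤ) → ℂ) (hc0 : c 0 = 0)
    (hsym : ∀ k, c (-k) = (starRingEnd ℂ) (c k))
    (hball : InUnitBallAnalytic s c)
    (hlow : ∀ k : Fin n → ℤ, Gen k → cutoffN n s δ ≤ norm1 k →
      δ * Real.exp (-(norm1 k) * s) / norm1 k ^ n ≤ ‖c k‖) :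
    ∀ k : Fin n → ℤ, Gen k → cutoffN n s δ ≤ norm1 k →
      ∃ θk ∈ Set.Ico (0 : ℝ) (2 * π),
        Complex.exp (Complex.I * (θk : ℂ)) = c k / (‖c k‖ : ℂ) ∧
        (∀ θ : ℝ, piK c k θ
          = 2 * ‖c k‖ * (Real.cos (θ + θk) + (Fstar c k (θ : ℂ)).re)) ∧
        (∀ θ : ℝ, (Fstar c k (θ : ℂ)).im = 0) ∧
        DifferentiableOn ℂ (Fstar c k) {z : ℂ | |z.im| < 1} ∧
        (∀ z : ℂ, |z.im| < 1 → ‖Fstar c k z‖ ≤ 2 ^ (-(40 : ℤ))) := by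
  intro k hk hkN
  set a : ℤ → ℂ := fun j => c (j • k)
  have ht := two_le_mul_of_cutoffN_le hn hs hδ0 hδ1 hkN
  have hK : 0 < norm1 k := pos_of_mul_pos_right (two_pos.trans_le ht) hs.le
  have hApos : 0 < ‖c k‖ := lt_of_lt_of_le (by positivity) (hlow k hk hkN)
  have ha := hball.norm_apply_smul_le k
  have ht1 : 1 < s * norm1 k := by linarith
  have hsym' : ∀ j, a (-j) = conj (a j) := fun j => by simp only [a, neg_smul, hsym]
  obtain ⟨θk, hθk, hexp⟩ := exists_mem_Ico_exp_I_mul_eq_div_norm (norm_pos_iff.1 hApos)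
  refine ⟨θk, hθk, hexp, fun θ => ?_, fun θ => ?_, ?_, fun z hz => ?_⟩
  · have ha1 : a 1 = ‖c k‖ * exp (I * θk) := by
      rw [hexp, show a 1 = c k from congrArg c (one_smul ℤ k)]
      field_simp [ofReal_ne_zero.2 hApos.ne']
    rw [piK, re_tsum_mul_exp_I_mul_ofReal hsym' (by simp [a, hc0]) ha1
      (summable_fourierTailTerm ha ht1 (by simp)), Fstar_eq_ofReal_mul_fourierTail, re_ofReal_mul]
    field_simp
    rfl
  · rw [Fstar_eq_ofReal_mul_fourierTail, im_ofReal_mul, im_fourierTail_ofReal hsym', mul_zero]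
  · simp_rw [funext (Fstar_eq_ofReal_mul_fourierTail c k)]
    exact (differentiableOn_fourierTail ha ht1).const_mul _
  · rw [Fstar_eq_ofReal_mul_fourierTail, norm_mul, norm_real, Real.norm_of_nonneg (by positivity)]
    calc (2 * ‖c k‖)⁻¹ * ‖fourierTail a z‖ ≤ (2 * ‖c k‖)⁻¹ * (2⁻¹ ^ 39 * ‖c k‖) := by
          gcongr
          refine (norm_fourierTail_le ha ht1 hz.le).trans
            ((two_mul_exp_sq_div_le_of_cutoffN_le hn hs hδ0 hδ1 hkN).trans ?_)
          gcongr
          exact hlow k hk hkN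
      _ = 2 ^ (-(40 : ℤ)) := by field_simp
end
end

section
/- Let n ≥ 2, let D̂ ⊆ ℝ^{n−1} be a bounded domain, let R > 0, 0 < r ≤ R, and κ ≥ 4 with R/r ≤ κ. Let b : (−R−r, R+r)×D̂×𝕋 → ℝ and G : D̂×𝕋 → ℝ be continuous functions, and suppose there are ε̄ and λ with 0 < ε̄ ≤ r²/2^{16} and 0 ≤ λ ≤ 1/(4κ)² such that |b| ≤ λ everywhere and |G| ≤ (1+λ)ε̄ everywhere. Define H(p₁,p̂,q₁) := (1+b(p₁,p̂,q₁))·p₁² + G(p̂,q₁) and E♭ := R² + R·r, and for each p̂ ∈ D̂ let ℳ(p̂) := {(p₁,q₁) ∈ (−R−r, R+r)×𝕋 : H(p₁,p̂,q₁) < E♭}. Then for every p̂ ∈ D̂: (−R−r/3, R+r/3)×𝕋 ⊆ ℳ(p̂) ⊆ (−R−r/2, R+r/2)×𝕋. -/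
open scoped Real


private lemma sandwich_aux1 (R r lam epsb : ℝ) (hr : 0 < r) (hrR : r ≤ R)
    (h1 : lam * R^2 ≤ r^2/16) (h2 : lam * R ≤ r/64) (h3 : lam ≤ 1/256)
    (h4 : epsb ≤ r^2/65536) (hl0 : 0 ≤ lam) (he : 0 < epsb) :
    (1 + lam) * (R + r/3)^2 + (1 + lam) * epsb < R^2 + R*r := by
  have f1 : lam * R * r ≤ r/64 * r := mul_le_mul_of_nonneg_right h2 hr.le
  have f2 : lam * r^2 ≤ 1/256 * r^2 := mul_le_mul_of_nonneg_right h3 (sq_nonneg r)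
  have f3 : lam * epsb ≤ 1/256 * epsb := mul_le_mul_of_nonneg_right h3 he.le
  have f4 : r * r ≤ R * r := mul_le_mul_of_nonneg_right hrR hr.le
  nlinarith [sq_nonneg r]

private lemma sandwich_aux2 (R r lam epsb : ℝ) (hr : 0 < r) (hrR : r ≤ R)
    (h1 : lam * R^2 ≤ r^2/16) (h2 : lam * R ≤ r/64) (h3 : lam ≤ 1/256)
    (h4 : epsb ≤ r^2/65536) (hl0 : 0 ≤ lam) (he : 0 < epsb) :
    R^2 + R*r + (1 + lam) * epsb < (1 - lam) * (R + r/2)^2 := by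
  have f1 : lam * R * r ≤ r/64 * r := mul_le_mul_of_nonneg_right h2 hr.le
  have f2 : lam * r^2 ≤ 1/256 * r^2 := mul_le_mul_of_nonneg_right h3 (sq_nonneg r)
  have f3 : lam * epsb ≤ 1/256 * epsb := mul_le_mul_of_nonneg_right h3 he.le
  nlinarith [sq_nonneg r]

set_option maxHeartbeats 1600000 in
/-- Sandwiching of the phase space of a one-degree-of-freedom Hamiltonian
in Generic Standard Form `H(p₁,p̂,q₁) := (1 + b(p₁,p̂,q₁))·p₁² + G(p̂,q₁)` between two boxes:
if `|b| ≤ λ`, `|G| ≤ (1+λ)ε̄` with `ε̄ ≤ r²/2¹⁶` and `λ ≤ 1/(4κ)²`, `R/r ≤ κ`, `κ ≥ 4`, then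
for every `p̂ ∈ D̂`
`(−R−r/3, R+r/3) × 𝕋 ⊆ ℳ(p̂) ⊆ (−R−r/2, R+r/2) × 𝕋`,
where `ℳ(p̂) := {(p₁,q₁) ∈ (−R−r, R+r) × 𝕋 : H(p₁,p̂,q₁) < E♭ := R² + R·r}`
(the circle `𝕋` is modeled by `ℝ` with all functions `2π`-periodic in `q₁`). -/
theorem standardForm_phaseSpace_sandwich {n : ℕ} (hn : 2 ≤ n)
    (Dhat : Set (Fin (n - 1) → ℝ)) (hDopen : IsOpen Dhat)
    (hDbdd : Bornology.IsBounded Dhat)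
    (R r κ lam epsb : ℝ)
    (hR : 0 < R) (hr : 0 < r) (hrR : r ≤ R) (hκ : 4 ≤ κ) (hRr : R / r ≤ κ)
    (b : ℝ → (Fin (n - 1) → ℝ) → ℝ → ℝ) (G : (Fin (n - 1) → ℝ) → ℝ → ℝ)
    (hbcont : ContinuousOn (fun z : ℝ × (Fin (n - 1) → ℝ) × ℝ => b z.1 z.2.1 z.2.2)
      (Set.Ioo (-R - r) (R + r) ×ˢ Dhat ×ˢ (Set.univ : Set ℝ)))
    (hGcont : ContinuousOn (fun z : (Fin (n - 1) → ℝ) × ℝ => G z.1 z.2)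
      (Dhat ×ˢ (Set.univ : Set ℝ)))
    (hbper : ∀ p₁ phat q₁, b p₁ phat (q₁ + 2 * π) = b p₁ phat q₁)
    (hGper : ∀ phat q₁, G phat (q₁ + 2 * π) = G phat q₁)
    (hepsb : 0 < epsb) (hepsb' : epsb ≤ r ^ 2 / 2 ^ 16)
    (hlam0 : 0 ≤ lam) (hlam : lam ≤ 1 / (4 * κ) ^ 2)
    (hb : ∀ p₁ ∈ Set.Ioo (-R - r) (R + r), ∀ phat ∈ Dhat, ∀ q₁ : ℝ, |b p₁ phat q₁| ≤ lam)
    (hG : ∀ phat ∈ Dhat, ∀ q₁ : ℝ, |G phat q₁| ≤ (1 + lam) * epsb) :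
    ∀ phat ∈ Dhat,
      (Set.Ioo (-R - r / 3) (R + r / 3) ×ˢ (Set.univ : Set ℝ)) ⊆
          {z : ℝ × ℝ | z.1 ∈ Set.Ioo (-R - r) (R + r) ∧
            (1 + b z.1 phat z.2) * z.1 ^ 2 + G phat z.2 < R ^ 2 + R * r} ∧
        {z : ℝ × ℝ | z.1 ∈ Set.Ioo (-R - r) (R + r) ∧
            (1 + b z.1 phat z.2) * z.1 ^ 2 + G phat z.2 < R ^ 2 + R * r} ⊆
          Set.Ioo (-R - r / 2) (R + r / 2) ×ˢ (Set.univ : Set ℝ) := by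
  intro phat hphat
  have hκr : R ≤ κ * r := (div_le_iff₀ hr).mp hRr
  have hκ2 : (0:ℝ) < κ := by linarith
  have hlam' : 16 * κ^2 * lam ≤ 1 := by
    have h16 : (0:ℝ) < 16 * κ^2 := by positivity
    have : lam ≤ 1 / (16 * κ^2) := by
      have : (4*κ)^2 = 16 * κ^2 := by ring
      rwa [this] at hlam
    calc 16 * κ^2 * lam ≤ 16 * κ^2 * (1 / (16 * κ^2)) := by
          exact mul_le_mul_of_nonneg_left this (le_of_lt h16)
      _ = 1 := by field_simp
  have hlam256 : lam ≤ 1 / 256 := by nlinarith [sq_nonneg (κ - 4), mul_nonneg hlam0 (sq_nonneg (κ-4)), mul_nonneg hlam0 (mul_nonneg hκ2.le (by linarith : (0:ℝ) ≤ κ - 4))]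
  have hlamR2 : lam * R^2 ≤ r^2 / 16 := by
    nlinarith [mul_nonneg hlam0 (mul_nonneg hR.le (by linarith : (0:ℝ) ≤ κ*r - R)), mul_nonneg hlam0 (mul_nonneg (by positivity : (0:ℝ) ≤ κ*r) (by linarith : (0:ℝ) ≤ κ*r - R)), sq_nonneg r]
  have hlamR : lam * R ≤ r / 64 := by
    nlinarith [mul_nonneg hlam0 (by linarith : (0:ℝ) ≤ κ*r - R), mul_nonneg (mul_nonneg hlam0 hr.le) (mul_nonneg hκ2.le (by linarith : (0:ℝ) ≤ κ - 4))]
  have heps : epsb ≤ r^2 / 65536 := by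
    have : (2:ℝ)^16 = 65536 := by norm_num
    linarith [hepsb', this ▸ hepsb']
  constructor
  · rintro ⟨p, q⟩ ⟨hp, -⟩
    obtain ⟨hp1, hp2⟩ := hp
    have hpIoo : p ∈ Set.Ioo (-R - r) (R + r) := ⟨by linarith, by linarith⟩
    refine ⟨hpIoo, ?_⟩
    have hB := hb p hpIoo phat hphat q
    have hGv := hG phat hphat q
    rw [abs_le] at hB hGv
    have hpsq : p^2 < (R + r/3)^2 := by
      apply sq_lt_sq' <;> [linarith; linarith]
    have h1B : 0 ≤ 1 + b p phat q := by linarith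
    have hbd : (1 + b p phat q) * p^2 ≤ (1 + lam) * p^2 := by
      nlinarith [sq_nonneg p]
    have hbd2 : (1 + lam) * p^2 < (1 + lam) * (R + r/3)^2 := by
      have : (0:ℝ) < 1 + lam := by linarith
      nlinarith
    have key := sandwich_aux1 R r lam epsb hr hrR hlamR2 hlamR hlam256 heps hlam0 hepsb
    linarith
  · rintro ⟨p, q⟩ ⟨⟨hp1, hp2⟩, hH⟩
    refine ⟨?_, Set.mem_univ _⟩
    have hB := hb p ⟨hp1, hp2⟩ phat hphat q
    have hGv := hG phat hphat q
    rw [abs_le] at hB hGv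
    have h1 : (1 - lam) * p^2 ≤ (1 + b p phat q) * p^2 := by
      nlinarith [sq_nonneg p]
    have h2 : (1 - lam) * p^2 < R^2 + R*r + (1 + lam) * epsb := by linarith
    have hpsq : p^2 < (R + r/2)^2 := by
      have key := sandwich_aux2 R r lam epsb hr hrR hlamR2 hlamR hlam256 heps hlam0 hepsb
      have h1l : (0:ℝ) < 1 - lam := by linarith
      exact lt_of_mul_lt_mul_left (h2.trans key) h1l.le
    have := abs_lt_of_sq_lt_sq' hpsq (by linarith)
    exact ⟨by linarith [this.1], by linarith [this.2]⟩
end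

section
/- Let G : ℝ → ℝ be continuous and 2π-periodic, and for E > max G define Ī(E) := (1/(2π))·∫₀^{2π} √(E − G(x)) dx. Then Ī is twice continuously differentiable and strictly increasing on (max G, +∞), and for every E > max G one has −Ī''(E) ≥ 2·(Ī'(E))³; consequently, the inverse function Ē of Ī satisfies Ē''(I) ≥ 2 for every I in the range of Ī. -/
/-!
Differentiating under the integral sign gives `Ī' = ⨍ (E - G)^(-1/2) / 2` and
`Ī'' = -⨍ (E - G)^(-3/2) / 4`, averages over `[0, 2π]`. Hence `2 Ī'³ ≤ -Ī''` is Jensen's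
inequality `(⨍ f)³ ≤ ⨍ f³` for `f = (E - G)^(-1/2)`, and it is equivalent to `Ē'' ≥ 2` because
the inverse function satisfies `Ē'' = -Ī'' / Ī'³`.
-/

open scoped Real Topology Interval ContDiff
open Set Filter Function MeasureTheory

theorem Real.rpow_le_rpow_add_rpow_of_mem_Icc {ε U u : ℝ} (hε : 0 < ε) (hu : u ∈ Icc ε U)
    (p : ℝ) : u ^ p ≤ ε ^ p + U ^ p := by
  have hU : 0 < U := hε.trans_le (hu.1.trans hu.2)
  rcases le_or_gt p 0 with hp | hp
  · linarith [Real.rpow_le_rpow_of_nonpos hε hu.1 hp, Real.rpow_pos_of_pos hU p]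
  · linarith [Real.rpow_le_rpow (hε.le.trans hu.1) hu.2 hp.le, Real.rpow_pos_of_pos hε p]

theorem pow_intervalAverage_le_intervalAverage_pow {f : ℝ → ℝ} {a b : ℝ} (hab : a < b)
    (hf : ContinuousOn f (Icc a b)) (hf0 : ∀ x ∈ Icc a b, 0 ≤ f x) (n : ℕ) :
    (⨍ x in a..b, f x) ^ n ≤ ⨍ x in a..b, f x ^ n := by
  rw [uIoc_of_le hab.le]
  have hfi : IntegrableOn f (Ioc a b) := (hf.integrableOn_Icc).mono_set Ioc_subset_Icc_self
  have hfni : IntegrableOn (f · ^ n) (Ioc a b) :=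
    ((hf.pow n).integrableOn_Icc).mono_set Ioc_subset_Icc_self
  refine (convexOn_pow n).map_set_average_le (continuous_pow n).continuousOn isClosed_Ici
    (by simp [hab]) measure_Ioc_lt_top.ne ?_ hfi hfni
  exact (ae_restrict_iff' measurableSet_Ioc).2
    (.of_forall fun x hx => hf0 x (Ioc_subset_Icc_self hx))

section InverseFunction

variable {𝕜 : Type*} [RCLike 𝕜] {f f' : 𝕜 → 𝕜} {S : Set 𝕜} {a f₀ f₀' : 𝕜}

theorem HasStrictDerivAt.eventually_invFunOn (hS : S ∈ 𝓝 a) (hf : HasStrictDerivAt f f₀ a)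
    (h0 : f₀ ≠ 0) : ∀ᶠ y in 𝓝 (f a), invFunOn f S y ∈ S ∧ f (invFunOn f S y) = y := by
  have hfS : f '' S ∈ 𝓝 (f a) := hf.map_nhds_eq h0 ▸ image_mem_map hS
  filter_upwards [hfS] with y ⟨x, hx, hxy⟩
  exact ⟨invFunOn_mem ⟨x, hx, hxy⟩, invFunOn_eq ⟨x, hx, hxy⟩⟩

theorem HasStrictDerivAt.invFunOn (hS : IsOpen S) (hinj : InjOn f S) (ha : a ∈ S)
    (hf : HasStrictDerivAt f f₀ a) (h0 : f₀ ≠ 0) :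
    HasStrictDerivAt (invFunOn f S) f₀⁻¹ (f a) :=
  hf.to_local_left_inverse h0 (eventually_of_mem (hS.mem_nhds ha) hinj.leftInvOn_invFunOn)

theorem ContDiffAt.invFunOn {n : WithTop ℕ∞} (hS : IsOpen S) (hinj : InjOn f S) (ha : a ∈ S)
    (hf : ContDiffAt 𝕜 n f a) (hn : n ≠ 0) (h0 : deriv f a ≠ 0) :
    ContDiffAt 𝕜 n (invFunOn f S) (f a) := by
  have hfs : HasStrictDerivAt f (deriv f a) a := hf.hasStrictDerivAt hn
  have hL : ContDiffAt 𝕜 n (hfs.localInverse f _ a h0) (f a) :=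
    hf.to_localInverse (hfs.hasStrictFDerivAt_equiv h0).hasFDerivAt hn
  refine hL.congr_of_eventuallyEq ?_
  have hLS : ∀ᶠ y in 𝓝 (f a), hfs.localInverse f _ a h0 y ∈ S :=
    (hfs.hasStrictFDerivAt_equiv h0).localInverse_continuousAt.preimage_mem_nhds
      (by rw [(hfs.hasStrictFDerivAt_equiv h0).localInverse_apply_image]; exact hS.mem_nhds ha)
  filter_upwards [hLS, hfs.eventually_right_inverse h0] with y hyS hy
  conv_lhs => rw [← hy]
  exact hinj.leftInvOn_invFunOn hyS

theorem contDiffOn_invFunOn_image {n : WithTop ℕ∞} (hS : IsOpen S) (hinj : InjOn f S)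
    (hf : ContDiffOn 𝕜 n f S) (hn : n ≠ 0) (h0 : ∀ x ∈ S, deriv f x ≠ 0) :
    ContDiffOn 𝕜 n (invFunOn f S) (f '' S) := by
  rintro _ ⟨x, hx, rfl⟩
  exact ((hf.contDiffAt (hS.mem_nhds hx)).invFunOn hS hinj hx hn (h0 x hx)).contDiffWithinAt

theorem hasDerivAt_deriv_invFunOn (hS : IsOpen S) (hinj : InjOn f S) (ha : a ∈ S)
    (hf : ∀ x ∈ S, HasStrictDerivAt f (f' x) x) (h0 : ∀ x ∈ S, f' x ≠ 0)
    (hf' : HasDerivAt f' f₀' a) :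
    HasDerivAt (deriv (invFunOn f S)) (-f₀' / f' a ^ 3) (f a) := by
  have hga : invFunOn f S (f a) = a := hinj.leftInvOn_invFunOn ha
  have hderiv : deriv (invFunOn f S) =ᶠ[𝓝 (f a)] fun y => (f' (invFunOn f S y))⁻¹ := by
    filter_upwards [(hf a ha).eventually_invFunOn (hS.mem_nhds ha) (h0 a ha)]
      with y ⟨hyS, hy⟩
    have := ((hf _ hyS).invFunOn hS hinj hyS (h0 _ hyS)).hasDerivAt
    rw [hy] at this
    exact this.deriv
  have hg : HasDerivAt (invFunOn f S) (f' a)⁻¹ (f a) := by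
    simpa [hga] using ((hf a ha).invFunOn hS hinj ha (h0 a ha)).hasDerivAt
  have hcomp : HasDerivAt (fun y => f' (invFunOn f S y)) (f₀' * (f' a)⁻¹) (f a) :=
    (hga.symm ▸ hf' : HasDerivAt f' f₀' (invFunOn f S (f a))).comp (f a) hg
  refine (hcomp.inv (by rw [hga]; exact h0 a ha)).congr_of_eventuallyEq hderiv
    |>.congr_deriv ?_
  rw [hga]
  field_simp [h0 a ha]

end InverseFunction

noncomputable def powerIntegral (G : ℝ → ℝ) (a b s E : ℝ) : ℝ :=
  ∫ x in a..b, (E - G x) ^ s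

noncomputable def meanAction (G : ℝ → ℝ) (a b E : ℝ) : ℝ :=
  (b - a)⁻¹ * ∫ x in a..b, √(E - G x)

section PowerIntegral

variable {G : ℝ → ℝ} {a b M E : ℝ}

theorem hasDerivAt_powerIntegral (hG : Continuous G) (hGM : ∀ x ∈ [[a, b]], G x ≤ M)
    (hE : M < E) (s : ℝ) :
    HasDerivAt (powerIntegral G a b s) (s * powerIntegral G a b (s - 1) E) E := by
  obtain ⟨x₀, -, hx₀⟩ := isCompact_uIcc.exists_isMinOn nonempty_uIcc hG.continuousOn
  set ε := (E - M) / 2 with hε_def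
  have hε : 0 < ε := by linarith
  have hgap : ∀ y ∈ Metric.ball E ε, ∀ x ∈ [[a, b]], y - G x ∈ Icc ε (E + ε - G x₀) := by
    intro y hy x hx
    have hy' := abs_lt.1 (Real.dist_eq y E ▸ Metric.mem_ball.1 hy)
    constructor <;> linarith [hGM x hx, isMinOn_iff.1 hx₀ x hx]
  have hcont : ∀ y ∈ Metric.ball E ε, ∀ p : ℝ,
      ContinuousOn (fun x => (y - G x) ^ p) [[a, b]] :=
    fun y hy p => (continuousOn_const.sub hG.continuousOn).rpow_const
      fun x hx => .inl (hε.trans_le (hgap y hy x hx).1).ne'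
  have key := intervalIntegral.hasDerivAt_integral_of_dominated_loc_of_deriv_le
    (F' := fun y x => s * (y - G x) ^ (s - 1)) (Metric.ball_mem_nhds E hε)
    (bound := fun _ => |s| * (ε ^ (s - 1) + (E + ε - G x₀) ^ (s - 1)))
    (.of_forall fun y => ((hG.measurable.const_sub y).pow_const s).aestronglyMeasurable)
    ((hcont E (Metric.mem_ball_self hε) s).intervalIntegrable (μ := volume))
    ((hG.measurable.const_sub E).pow_const (s - 1) |>.const_mul s).aestronglyMeasurable
    (.of_forall fun x hx y hy => ?_) intervalIntegrable_const
    (.of_forall fun x hx y hy => ?_)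
  · exact key.2.congr_deriv (intervalIntegral.integral_const_mul _ _)
  · have hgapx := hgap y hy x (uIoc_subset_uIcc hx)
    rw [norm_mul, Real.norm_eq_abs,
      Real.norm_of_nonneg (Real.rpow_nonneg (hε.le.trans hgapx.1) _)]
    exact mul_le_mul_of_nonneg_left (Real.rpow_le_rpow_add_rpow_of_mem_Icc hε hgapx _)
      (abs_nonneg s)
  · have hpos := hε.trans_le (hgap y hy x (uIoc_subset_uIcc hx)).1
    simpa [Function.comp_def] using (Real.hasDerivAt_rpow_const (p := s) (.inl hpos.ne')).comp y
      ((hasDerivAt_id y).sub_const (G x))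

theorem contDiffOn_powerIntegral (hG : Continuous G) (hGM : ∀ x ∈ [[a, b]], G x ≤ M) (s : ℝ) :
    ContDiffOn ℝ ∞ (powerIntegral G a b s) (Ioi M) := by
  refine contDiffOn_infty.2 fun n => ?_
  induction n generalizing s with
  | zero =>
    exact contDiffOn_zero.2 fun E hE =>
      (hasDerivAt_powerIntegral hG hGM hE s).continuousAt.continuousWithinAt
  | succ n ih =>
    rw [Nat.cast_succ, contDiffOn_succ_iff_deriv_of_isOpen isOpen_Ioi]
    refine ⟨fun E hE =>
      (hasDerivAt_powerIntegral hG hGM hE s).differentiableAt.differentiableWithinAt, by simp, ?_⟩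
    exact ((ih (s - 1)).const_smul s).congr fun E hE =>
      (hasDerivAt_powerIntegral hG hGM hE s).deriv

theorem powerIntegral_pos (hG : Continuous G) (hGM : ∀ x ∈ [[a, b]], G x ≤ M) (hab : a < b)
    (hE : M < E) (s : ℝ) : 0 < powerIntegral G a b s E := by
  have hgap : ∀ x ∈ [[a, b]], 0 < E - G x := fun x hx => by linarith [hGM x hx]
  refine intervalIntegral.intervalIntegral_pos_of_pos_on ?_ (fun x hx => ?_) hab
  · exact ((continuousOn_const.sub hG.continuousOn).rpow_const
      fun x hx => .inl (hgap x hx).ne').intervalIntegrable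
  · exact Real.rpow_pos_of_pos (hgap x (Ioo_subset_Icc_self.trans Icc_subset_uIcc hx)) s

theorem powerIntegral_neg_half_pow_three_le (hG : Continuous G) (hGM : ∀ x ∈ [[a, b]], G x ≤ M)
    (hab : a < b) (hE : M < E) :
    powerIntegral G a b (-(1 / 2)) E ^ 3 ≤ (b - a) ^ 2 * powerIntegral G a b (-(3 / 2)) E := by
  have hgap : ∀ x ∈ Icc a b, 0 < E - G x := fun x hx => by
    linarith [hGM x (Icc_subset_uIcc hx)]
  have hcube : ∀ x ∈ Icc a b,
      ((E - G x) ^ (-(1 / 2) : ℝ)) ^ 3 = (E - G x) ^ (-(3 / 2) : ℝ) := by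
    intro x hx
    rw [← Real.rpow_natCast, ← Real.rpow_mul (hgap x hx).le]
    norm_num
  have hjensen := pow_intervalAverage_le_intervalAverage_pow
    (f := fun x => (E - G x) ^ (-(1 / 2) : ℝ)) hab
    ((continuousOn_const.sub hG.continuousOn).rpow_const fun x hx => .inl (hgap x hx).ne')
    (fun x hx => Real.rpow_nonneg (hgap x hx).le _) 3
  rw [interval_average_eq_div, interval_average_eq_div,
    intervalIntegral.integral_congr (fun x hx => hcube x (uIcc_of_le hab.le ▸ hx)),
    div_pow, div_le_div_iff₀ (by positivity) (by linarith)] at hjensen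
  have hba : 0 < b - a := by linarith
  refine le_of_mul_le_mul_right ?_ hba
  calc _ ≤ _ := hjensen
    _ = _ := by unfold powerIntegral; ring

theorem meanAction_eq_powerIntegral :
    meanAction G a b = fun E => (b - a)⁻¹ * powerIntegral G a b (1 / 2) E := by
  ext E
  simp only [meanAction, powerIntegral, Real.sqrt_eq_rpow]

theorem contDiffOn_meanAction (hG : Continuous G) (hGM : ∀ x ∈ [[a, b]], G x ≤ M) :
    ContDiffOn ℝ ∞ (meanAction G a b) (Ioi M) := by
  rw [meanAction_eq_powerIntegral]
  exact contDiffOn_const.mul (contDiffOn_powerIntegral hG hGM _)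

theorem hasDerivAt_meanAction (hG : Continuous G) (hGM : ∀ x ∈ [[a, b]], G x ≤ M)
    (hE : M < E) :
    HasDerivAt (meanAction G a b) ((2 * (b - a))⁻¹ * powerIntegral G a b (-(1 / 2)) E) E := by
  rw [meanAction_eq_powerIntegral]
  refine ((hasDerivAt_powerIntegral hG hGM hE _).const_mul _).congr_deriv ?_
  norm_num
  ring

theorem hasDerivAt_deriv_meanAction (hG : Continuous G) (hGM : ∀ x ∈ [[a, b]], G x ≤ M)
    (hE : M < E) :
    HasDerivAt (deriv (meanAction G a b))
      (-(4 * (b - a))⁻¹ * powerIntegral G a b (-(3 / 2)) E) E := by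
  have hderiv : deriv (meanAction G a b) =ᶠ[𝓝 E]
      fun y => (2 * (b - a))⁻¹ * powerIntegral G a b (-(1 / 2)) y :=
    eventually_of_mem (Ioi_mem_nhds hE) fun y hy => (hasDerivAt_meanAction hG hGM hy).deriv
  refine (((hasDerivAt_powerIntegral hG hGM hE _).const_mul _).congr_of_eventuallyEq
    hderiv).congr_deriv ?_
  norm_num
  ring

theorem deriv_meanAction_pos (hG : Continuous G) (hGM : ∀ x ∈ [[a, b]], G x ≤ M) (hab : a < b)
    (hE : M < E) : 0 < deriv (meanAction G a b) E := by
  rw [(hasDerivAt_meanAction hG hGM hE).deriv]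
  have := powerIntegral_pos hG hGM hab hE (-(1 / 2))
  have : 0 < b - a := sub_pos.2 hab
  positivity

theorem two_mul_deriv_meanAction_pow_three_le (hG : Continuous G)
    (hGM : ∀ x ∈ [[a, b]], G x ≤ M) (hab : a < b) (hE : M < E) :
    2 * deriv (meanAction G a b) E ^ 3 ≤ -deriv (deriv (meanAction G a b)) E := by
  rw [(hasDerivAt_meanAction hG hGM hE).deriv, (hasDerivAt_deriv_meanAction hG hGM hE).deriv]
  have hba : 0 < b - a := sub_pos.2 hab
  calc 2 * ((2 * (b - a))⁻¹ * powerIntegral G a b (-(1 / 2)) E) ^ 3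
      = (4 * (b - a) ^ 3)⁻¹ * powerIntegral G a b (-(1 / 2)) E ^ 3 := by
        field_simp; ring
    _ ≤ (4 * (b - a) ^ 3)⁻¹ * ((b - a) ^ 2 * powerIntegral G a b (-(3 / 2)) E) :=
      mul_le_mul_of_nonneg_left (powerIntegral_neg_half_pow_three_le hG hGM hab hE)
        (by positivity)
    _ = _ := by field_simp

end PowerIntegral

/-- Let `G : ℝ → ℝ` be continuous and `2π`-periodic, and for `E > max G` let
`Ī(E) := (1/2π)·∫₀^{2π} √(E − G x) dx`. Then `Ī` is C², strictly increasing on `(max G, ∞)`,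
satisfies `−Ī'' ≥ 2(Ī')³` there, and its inverse `Ē` satisfies `Ē'' ≥ 2` on the range of `Ī`. -/
theorem outer_action_convexity (G : ℝ → ℝ) (hGc : Continuous G)
    (hGper : ∀ x, G (x + 2 * π) = G x) :
    ∀ (M : ℝ), M = sSup (Set.range G) →
    ∀ (Ibar : ℝ → ℝ),
      (Ibar = fun E => (1 / (2 * π)) * ∫ x in (0 : ℝ)..(2 * π), Real.sqrt (E - G x)) →
      ContDiffOn ℝ 2 Ibar (Set.Ioi M) ∧
      StrictMonoOn Ibar (Set.Ioi M) ∧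
      (∀ E ∈ Set.Ioi M, 2 * (deriv Ibar E) ^ 3 ≤ -(deriv (deriv Ibar) E)) ∧
      ∃ Ebar : ℝ → ℝ,
        ContDiffOn ℝ 2 Ebar (Ibar '' Set.Ioi M) ∧
        (∀ E ∈ Set.Ioi M, Ebar (Ibar E) = E) ∧
        ∀ E ∈ Set.Ioi M, 2 ≤ deriv (deriv Ebar) (Ibar E) := by
  intro M hM Ibar hIbar
  have hGM : ∀ x ∈ [[0, 2 * π]], G x ≤ M := fun x _ =>
    hM ▸ le_csSup
      (Function.Periodic.compact_of_continuous hGper Real.two_pi_pos.ne' hGc).bddAbove ⟨x, rfl⟩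
  obtain rfl : Ibar = meanAction G 0 (2 * π) := by
    rw [hIbar]; ext E; simp only [meanAction, sub_zero, one_div]
  have hC2 : ContDiffOn ℝ 2 (meanAction G 0 (2 * π)) (Ioi M) :=
    (contDiffOn_meanAction hGc hGM).of_le (WithTop.coe_le_coe.2 le_top)
  have hpos : ∀ E ∈ Ioi M, 0 < deriv (meanAction G 0 (2 * π)) E :=
    fun E hE => deriv_meanAction_pos hGc hGM Real.two_pi_pos hE
  have hmono : StrictMonoOn (meanAction G 0 (2 * π)) (Ioi M) :=
    strictMonoOn_of_deriv_pos (convex_Ioi M) hC2.continuousOn (by rwa [interior_Ioi])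
  have hconvex : ∀ E ∈ Ioi M, 2 * deriv (meanAction G 0 (2 * π)) E ^ 3 ≤
      -deriv (deriv (meanAction G 0 (2 * π))) E :=
    fun E hE => two_mul_deriv_meanAction_pow_three_le hGc hGM Real.two_pi_pos hE
  refine ⟨hC2, hmono, hconvex, invFunOn (meanAction G 0 (2 * π)) (Ioi M),
    contDiffOn_invFunOn_image isOpen_Ioi hmono.injOn hC2 two_ne_zero fun E hE => (hpos E hE).ne',
    fun E hE => hmono.injOn.leftInvOn_invFunOn hE, fun E hE => ?_⟩
  have hstrict : ∀ x ∈ Ioi M, HasStrictDerivAt (meanAction G 0 (2 * π))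
      (deriv (meanAction G 0 (2 * π)) x) x :=
    fun x hx => (hC2.contDiffAt (Ioi_mem_nhds hx)).hasStrictDerivAt two_ne_zero
  rw [(hasDerivAt_deriv_invFunOn isOpen_Ioi hmono.injOn hE hstrict (fun x hx => (hpos x hx).ne')
    (hasDerivAt_deriv_meanAction hGc hGM hE).differentiableAt.hasDerivAt).deriv,
    le_div_iff₀ (pow_pos (hpos E hE) 3)]
  linarith [hconvex E hE]
end

section
/- Let d ≥ 1, n ≥ 1, D ⊆ ℝ^d, r > 0, 0 < s, and ξ ≥ 0. Let D_r := ∪_{y∈D}{z ∈ ℂ^d : |z−y| < r} and 𝕋ⁿ_s := {x ∈ ℂⁿ : |Im xⱼ| < s for all j}. Let g : D_r × 𝕋ⁿ_s → ℂ be holomorphic, 2π-periodic in each of the last n variables, real-valued on D × ℝⁿ, and satisfy |Im g| ≤ ξ on D_r × 𝕋ⁿ_s. Then for every 0 < ζ ≤ 1/2, sup over D_{ζr} × 𝕋ⁿ_{ζs} of |Im g| is at most 8ζξ. -/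
open scoped Real

/-- The complex `r`-neighborhood (with respect to the Euclidean norm) of a real set
`D ⊆ ℝ^d`, viewed inside `ℂ^d`. -/
def complexNbhd {d : ℕ} (D : Set (Fin d → ℝ)) (r : ℝ) : Set (Fin d → ℂ) :=
  {z | ∃ y ∈ D, Real.sqrt (∑ i, ‖z i - (y i : ℂ)‖ ^ 2) < r}

/-- The complex strip `𝕋ⁿ_s = {x ∈ ℂⁿ : |Im xⱼ| < s ∀ j}`. -/
def complexStrip (n : ℕ) (s : ℝ) : Set (Fin n → ℂ) :=
  {x | ∀ j, |(x j).im| < s}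

/-!
Restrict `g` to the complex line through the real point `(y, Re x)` and `(z, x)`, where `y ∈ D`
is a centre for `z`. Parametrised so that `t = 1` gives `(z, x)`, this line stays in
`D_r × 𝕋ⁿ_s` for `|t| < 1/ζ`, and there `Im g` is bounded by `ξ` and vanishes at `t = 0`.
The Borel–Carathéodory inequality on the disc of radius `1/ζ ≥ 2` then bounds
`|g(z, x) - g(y, Re x)|`, hence `|Im g(z, x)|`, by `2ξ/(1/ζ - 1) ≤ 4ζξ`.
-/

open Complex Metric Set AffineMap

theorem lineMap_mem_complexNbhd {d : ℕ} {D : Set (Fin d → ℝ)} {y : Fin d → ℝ} (hy : y ∈ D)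
    {z : Fin d → ℂ} {ρ r : ℝ} (hz : √(∑ i, ‖z i - (y i : ℂ)‖ ^ 2) < ρ) {t : ℂ}
    (ht : ‖t‖ * ρ < r) :
    lineMap (fun i => (y i : ℂ)) z t ∈ complexNbhd D r := by
  refine ⟨y, hy, ?_⟩
  simp only [pi_lineMap_apply, lineMap_apply_ring', add_sub_cancel_right, norm_mul, mul_pow,
    ← Finset.mul_sum, Real.sqrt_mul (sq_nonneg _), Real.sqrt_sq (norm_nonneg t)]
  exact (mul_le_mul_of_nonneg_left hz.le (norm_nonneg t)).trans_lt ht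

theorem lineMap_re_mem_complexStrip {n : ℕ} {x : Fin n → ℂ} {ρ s : ℝ}
    (hx : x ∈ complexStrip n ρ) {t : ℂ} (ht : ‖t‖ * ρ < s) :
    lineMap (fun j => ((x j).re : ℂ)) x t ∈ complexStrip n s := by
  intro j
  have him : (lineMap (fun j => ((x j).re : ℂ)) x t j).im = t.re * (x j).im := by
    simp [pi_lineMap_apply, lineMap_apply_ring']
  rw [him, abs_mul]
  calc |t.re| * |(x j).im| ≤ ‖t‖ * ρ :=
        mul_le_mul (abs_re_le_norm t) (hx j).le (abs_nonneg _) (norm_nonneg t)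
    _ < s := ht

theorem im_bound_shrink_general {d n : ℕ}
    (D : Set (Fin d → ℝ)) (r s ξ : ℝ) (hr : 0 < r) (hs : 0 < s) (hξ : 0 ≤ ξ)
    (g : (Fin d → ℂ) × (Fin n → ℂ) → ℂ)
    (hol : DifferentiableOn ℂ g (complexNbhd D r ×ˢ complexStrip n s))
    (hreal : ∀ y ∈ D, ∀ x : Fin n → ℝ,
      (g ((fun i => (y i : ℂ)), (fun j => (x j : ℂ)))).im = 0)
    (hbound : ∀ w ∈ complexNbhd D r ×ˢ complexStrip n s, |(g w).im| ≤ ξ) :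
    ∀ ζ : ℝ, 0 < ζ → ζ ≤ 1 / 2 →
      ∀ w ∈ complexNbhd D (ζ * r) ×ˢ complexStrip n (ζ * s), |(g w).im| ≤ 8 * ζ * ξ := by
  rintro ζ hζ hζ2 w ⟨⟨y, hyD, hy⟩, hx⟩
  set w₀ : (Fin d → ℂ) × (Fin n → ℂ) := (fun i => (y i : ℂ), fun j => ((w.2 j).re : ℂ))
  have hw₀ : (g w₀).im = 0 := hreal y hyD fun j => (w.2 j).re
  have hL : MapsTo (lineMap w₀ w) (ball (0 : ℂ) ζ⁻¹) (complexNbhd D r ×ˢ complexStrip n s) := by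
    intro t ht
    have htζ : ‖t‖ * ζ < 1 := by
      rw [mem_ball_zero_iff] at ht
      rwa [← lt_inv_mul_iff₀' hζ, mul_one]
    exact ⟨lineMap_mem_complexNbhd hyD hy (by nlinarith [norm_nonneg t]),
      lineMap_re_mem_complexStrip hx (by nlinarith [norm_nonneg t])⟩
  have h1 : (1 : ℂ) ∈ ball (0 : ℂ) ζ⁻¹ := by
    rw [mem_ball_zero_iff, norm_one, one_lt_inv₀ hζ]
    linarith
  rcases hξ.eq_or_lt with rfl | hξ
  · simpa using hbound w (by simpa using hL h1)
  set f : ℂ → ℂ := fun t => -I * (g (lineMap w₀ w t) - g w₀)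
  have hf : DifferentiableOn ℂ f (ball (0 : ℂ) ζ⁻¹) :=
    ((hol.comp ((contDiff_lineMap w₀ w (n := 1)).differentiable one_ne_zero).differentiableOn
      hL).sub_const _).const_mul _
  have hf_re : MapsTo f (ball (0 : ℂ) ζ⁻¹) {u | u.re ≤ ξ} := fun t ht => by
    simpa [f, hw₀] using (le_abs_self _).trans (hbound _ (hL ht))
  calc |(g w).im| = |(f 1).re| := by simp [f, hw₀]
    _ ≤ ‖f 1‖ := abs_re_le_norm _
    _ ≤ 2 * ξ * ‖(1 : ℂ)‖ / (ζ⁻¹ - ‖(1 : ℂ)‖) :=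
      borelCaratheodory_zero hξ hf hf_re (by positivity) h1 (by simp [f])
    _ ≤ 8 * ζ * ξ := by
      rw [norm_one, mul_one, div_le_iff₀ (by rw [sub_pos, one_lt_inv₀ hζ]; linarith)]
      calc 2 * ξ ≤ 8 * ξ * (1 - ζ) := by nlinarith
        _ = 8 * ζ * ξ * (ζ⁻¹ - 1) := by field_simp

/-- Let `g : D_r × 𝕋ⁿ_s → ℂ` be holomorphic, `2π`-periodic in each of the
last `n` variables, real-valued on `D × ℝⁿ`, with `|Im g| ≤ ξ` on `D_r × 𝕋ⁿ_s`. Then for every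
`0 < ζ ≤ 1/2`, `|Im g| ≤ 8 ζ ξ` on `D_{ζ r} × 𝕋ⁿ_{ζ s}`. -/
theorem im_bound_shrink {d n : ℕ} (hd : 1 ≤ d) (hn : 1 ≤ n)
    (D : Set (Fin d → ℝ)) (r s ξ : ℝ) (hr : 0 < r) (hs : 0 < s) (hξ : 0 ≤ ξ)
    (g : (Fin d → ℂ) × (Fin n → ℂ) → ℂ)
    (hol : DifferentiableOn ℂ g (complexNbhd D r ×ˢ complexStrip n s))
    (hper : ∀ z x, ∀ m : Fin n → ℤ, g (z, x + fun j => (2 * π * (m j : ℝ) : ℂ)) = g (z, x))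
    (hreal : ∀ y ∈ D, ∀ x : Fin n → ℝ,
      (g ((fun i => (y i : ℂ)), (fun j => (x j : ℂ)))).im = 0)
    (hbound : ∀ w ∈ complexNbhd D r ×ˢ complexStrip n s, |(g w).im| ≤ ξ) :
    ∀ ζ : ℝ, 0 < ζ → ζ ≤ 1 / 2 →
      ∀ w ∈ complexNbhd D (ζ * r) ×ˢ complexStrip n (ζ * s), |(g w).im| ≤ 8 * ζ * ξ :=
  im_bound_shrink_general D r s ξ hr hs hξ g hol hreal hbound
end

section
/- Let ξ ≥ 0 and let G be holomorphic on the open unit disc {z ∈ ℂ : |z| < 1} with |Im G(z)| ≤ ξ for all |z| < 1 and G(0) ∈ ℝ. Then |Im G(z)| ≤ 8·|z|·ξ for every z with |z| ≤ 1/2. -/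
/-!
With `c = π / (2ξ)`, the function `F = c (G - G 0)` maps the disc into the strip `|Im w| ≤ π/2`
and fixes `0`; the map `w ↦ (exp w - 1) / (exp w + 1) = tanh (w / 2)` sends that strip into the
closed unit disc and `0` to `0`. Schwarz's lemma for the composite gives
`‖exp F z - 1‖ ≤ ‖z‖ ‖exp F z + 1‖`, which forces `cos (Im F z) ≥ (1 - ‖z‖²) / (1 + ‖z‖²)`,
i.e. `|Im F z| ≤ 2 arctan ‖z‖`. Hence `|Im G z| ≤ (4ξ/π) arctan ‖z‖ ≤ 8 ‖z‖ ξ`.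
-/

open Real Metric Set

namespace Complex

lemma sq_norm_add_one (ζ : ℂ) : ‖ζ + 1‖ ^ 2 = ‖ζ‖ ^ 2 + 2 * ζ.re + 1 := by
  simp only [Complex.sq_norm, normSq_apply, add_re, add_im, one_re, one_im]
  ring

lemma sq_norm_sub_one (ζ : ℂ) : ‖ζ - 1‖ ^ 2 = ‖ζ‖ ^ 2 - 2 * ζ.re + 1 := by
  simp only [Complex.sq_norm, normSq_apply, sub_re, sub_im, one_re, one_im]
  ring

lemma add_one_ne_zero_of_re_nonneg {ζ : ℂ} (h : 0 ≤ ζ.re) : ζ + 1 ≠ 0 := fun h0 => by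
  have := congrArg re h0
  simp only [add_re, one_re, zero_re] at this
  linarith

lemma norm_sub_one_le_norm_add_one {ζ : ℂ} (h : 0 ≤ ζ.re) : ‖ζ - 1‖ ≤ ‖ζ + 1‖ := by
  rw [← pow_le_pow_iff_left₀ (norm_nonneg _) (norm_nonneg _) two_ne_zero, sq_norm_sub_one,
    sq_norm_add_one]
  linarith

lemma one_sub_sq_mul_norm_le_of_norm_sub_one_le {ζ : ℂ} {s : ℝ} (hre : 0 ≤ ζ.re)
    (h : ‖ζ - 1‖ ≤ s * ‖ζ + 1‖) : (1 - s ^ 2) * ‖ζ‖ ≤ (1 + s ^ 2) * ζ.re := by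
  rcases le_or_gt (s ^ 2) 1 with hs | hs
  · have hsq : ‖ζ - 1‖ ^ 2 ≤ s ^ 2 * ‖ζ + 1‖ ^ 2 := by
      rw [← mul_pow]; exact pow_le_pow_left₀ (norm_nonneg _) h 2
    rw [sq_norm_sub_one, sq_norm_add_one] at hsq
    nlinarith [mul_nonneg (sub_nonneg.2 hs) (sq_nonneg (‖ζ‖ - 1))]
  · nlinarith [norm_nonneg ζ]

lemma re_exp_nonneg {w : ℂ} (hw : |w.im| ≤ π / 2) : 0 ≤ (exp w).re := by
  rw [exp_re]
  exact mul_nonneg (Real.exp_pos _).le (Real.cos_nonneg_of_neg_pi_div_two_le_of_le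
    (abs_le.1 hw).1 (abs_le.1 hw).2)

end Complex

lemma Real.cos_two_mul_arctan (s : ℝ) : cos (2 * arctan s) = (1 - s ^ 2) / (1 + s ^ 2) := by
  rw [cos_two_mul, cos_sq_arctan]
  field_simp
  ring

lemma Real.arctan_le_self {s : ℝ} (hs : 0 ≤ s) : arctan s ≤ s := by
  simpa only [tan_arctan] using le_tan (arctan_nonneg.2 hs) (arctan_lt_pi_div_two s)

lemma abs_im_le_two_arctan_of_norm_exp_sub_one_le {w : ℂ} {s : ℝ} (hs : 0 ≤ s)
    (hw : |w.im| ≤ π / 2) (h : ‖Complex.exp w - 1‖ ≤ s * ‖Complex.exp w + 1‖) :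
    |w.im| ≤ 2 * arctan s := by
  have hcos : cos (2 * arctan s) ≤ cos |w.im| := by
    have key := Complex.one_sub_sq_mul_norm_le_of_norm_sub_one_le (Complex.re_exp_nonneg hw) h
    rw [Complex.norm_exp, Complex.exp_re] at key
    rw [cos_two_mul_arctan, cos_abs, div_le_iff₀ (by positivity)]
    nlinarith [Real.exp_pos w.re]
  exact (strictAntiOn_cos.le_iff_ge
    ⟨by linarith [arctan_nonneg.2 hs], by linarith [arctan_lt_pi_div_two s]⟩
    ⟨abs_nonneg _, by linarith [pi_pos]⟩).1 hcos

theorem abs_im_le_two_arctan_of_abs_im_le_pi_div_two {F : ℂ → ℂ}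
    (hF : DifferentiableOn ℂ F (ball 0 1)) (hIm : ∀ w ∈ ball (0 : ℂ) 1, |(F w).im| ≤ π / 2)
    (hF0 : F 0 = 0) {z : ℂ} (hz : z ∈ ball (0 : ℂ) 1) :
    |(F z).im| ≤ 2 * arctan ‖z‖ := by
  have hre w (hw : w ∈ ball (0 : ℂ) 1) := Complex.re_exp_nonneg (hIm w hw)
  have hden w (hw : w ∈ ball (0 : ℂ) 1) := Complex.add_one_ne_zero_of_re_nonneg (hre w hw)
  set f : ℂ → ℂ := fun w => (Complex.exp (F w) - 1) / (Complex.exp (F w) + 1)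
  have hf : DifferentiableOn ℂ f (ball 0 1) :=
    (hF.cexp.sub_const 1).div (hF.cexp.add_const 1) hden
  have hmaps : MapsTo f (ball 0 1) (closedBall 0 1) := fun w hw => by
    rw [mem_closedBall_zero_iff, norm_div, div_le_one (norm_pos_iff.2 (hden w hw))]
    exact Complex.norm_sub_one_le_norm_add_one (hre w hw)
  have hschwarz : ‖f z‖ ≤ ‖z‖ :=
    Complex.norm_le_norm_of_mapsTo_ball hf hmaps (by simp [f, hF0]) (mem_ball_zero_iff.1 hz)
  rw [norm_div, div_le_iff₀ (norm_pos_iff.2 (hden z hz))] at hschwarz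
  exact abs_im_le_two_arctan_of_norm_exp_sub_one_le (norm_nonneg z) (hIm z hz) hschwarz

theorem abs_im_le_mul_arctan_of_abs_im_le {G : ℂ → ℂ} {ξ : ℝ}
    (hG : DifferentiableOn ℂ G (ball 0 1)) (hIm : ∀ w ∈ ball (0 : ℂ) 1, |(G w).im| ≤ ξ)
    (hG0 : (G 0).im = 0) {z : ℂ} (hz : z ∈ ball (0 : ℂ) 1) :
    |(G z).im| ≤ 4 / π * ξ * arctan ‖z‖ := by
  have hξ : 0 ≤ ξ := (abs_nonneg _).trans (hIm 0 (mem_ball_self one_pos))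
  rcases hξ.eq_or_lt with rfl | hξ
  · simpa using hIm z hz
  set c : ℝ := π / (2 * ξ) with hc_def
  have hc : 0 < c := by positivity
  have hcξ : c * ξ = π / 2 := by rw [hc_def]; field_simp
  have hF_im w : |((c : ℂ) * (G w - G 0)).im| = c * |(G w).im| := by
    simp [hG0, abs_mul, abs_of_pos hc]
  have hF := abs_im_le_two_arctan_of_abs_im_le_pi_div_two (F := fun w => c * (G w - G 0))
    ((hG.sub_const _).const_mul _)
    (fun w hw => by rw [hF_im, ← hcξ]; exact mul_le_mul_of_nonneg_left (hIm w hw) hc.le)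
    (by simp) hz
  rw [hF_im] at hF
  calc |(G z).im| = c * |(G z).im| * (2 * ξ / π) := by rw [hc_def]; field_simp
    _ ≤ 2 * arctan ‖z‖ * (2 * ξ / π) := by gcongr
    _ = 4 / π * ξ * arctan ‖z‖ := by ring

theorem im_bound_of_holomorphic_on_disc_general (ξ : ℝ) (G : ℂ → ℂ)
    (hG : DifferentiableOn ℂ G (Metric.ball (0 : ℂ) 1))
    (hIm : ∀ z ∈ Metric.ball (0 : ℂ) 1, |(G z).im| ≤ ξ)
    (hG0 : (G 0).im = 0) :
    ∀ z : ℂ, ‖z‖ ≤ 1 / 2 → |(G z).im| ≤ 8 * ‖z‖ * ξ := by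
  intro z hz
  have hzball : z ∈ ball (0 : ℂ) 1 := mem_ball_zero_iff.2 (by linarith)
  have hξ : 0 ≤ ξ := (abs_nonneg _).trans (hIm 0 (mem_ball_self one_pos))
  calc |(G z).im| ≤ 4 / π * ξ * arctan ‖z‖ :=
        abs_im_le_mul_arctan_of_abs_im_le hG hIm hG0 hzball
    _ ≤ 8 * ξ * ‖z‖ := by
        gcongr
        · rw [div_le_iff₀ pi_pos]; linarith [pi_gt_three]
        · exact arctan_le_self (norm_nonneg z)
    _ = 8 * ‖z‖ * ξ := by ring

/-- Let `ξ ≥ 0` and let `G` be holomorphic on the open unit disc with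
`|Im G| ≤ ξ` there and `G 0 ∈ ℝ`. Then `|Im G z| ≤ 8⬝|z|⬝ξ` for every `z` with `|z| ≤ 1/2`. -/
theorem im_bound_of_holomorphic_on_disc (ξ : ℝ) (hξ : 0 ≤ ξ) (G : ℂ → ℂ)
    (hG : DifferentiableOn ℂ G (Metric.ball (0 : ℂ) 1))
    (hIm : ∀ z ∈ Metric.ball (0 : ℂ) 1, |(G z).im| ≤ ξ)
    (hG0 : (G 0).im = 0) :
    ∀ z : ℂ, ‖z‖ ≤ 1 / 2 → |(G z).im| ≤ 8 * ‖z‖ * ξ :=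
  im_bound_of_holomorphic_on_disc_general ξ G hG hIm hG0
end

section
/- Let n ≥ 2, let D ⊆ ℝⁿ be open, and let g : ℝ^{n−1} → ℝ be smooth. Define Ψ_g : ℝⁿ×ℝⁿ → ℝⁿ×ℝⁿ by Ψ_g(p,q) := (p₁+g(p̂), p̂, q₁, q̂ − q₁·∇g(p̂)), where p = (p₁,p̂) and q = (q₁,q̂), and j_g(p) := (p₁+g(p̂), p̂). Let η, ψ : D×ℝ → ℝ and χ : D×ℝ → ℝ^{n−1} be smooth functions, 2π-periodic in their last argument q₁, and define Φ : D×ℝⁿ → ℝⁿ×ℝⁿ by Φ(p,q) := (η(p,q₁), p̂, q₁+ψ(p,q₁), q̂+χ(p,q₁)). For u ∈ {η,ψ,χ} set u_g(p,q₁) := u(p₁−g(p̂), p̂, q₁), and define τ_gΦ on j_g(D)×ℝⁿ by τ_gΦ(p,q) := (η_g(p,q₁)+g(p̂), p̂, q₁+ψ_g(p,q₁), q̂+χ_g(p,q₁)−ψ_g(p,q₁)·∇g(p̂)). Then τ_gΦ = Ψ_g ∘ Φ ∘ Ψ_{−g} on j_g(D)×ℝⁿ; in particular, the first n+1 components of τ_gΦ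 depend only on (p,q₁) and equal (η_g+g, p̂, q₁+ψ_g), and if Φ is symplectic on D×ℝⁿ (its Jacobian matrix J satisfies Jᵀ𝕁J = 𝕁 at every point, 𝕁 being the standard symplectic matrix) then τ_gΦ is symplectic on j_g(D)×ℝⁿ. -/
open scoped Real

noncomputable section

/-- The gradient `∇g` of `g : ℝ^m → ℝ`, i.e. the vector of its partial derivatives. -/
def gradv {m : ℕ} (g : (Fin m → ℝ) → ℝ) (x : Fin m → ℝ) : Fin m → ℝ :=
  fun j => fderiv ℝ g x (Pi.single j 1)

/-- The symplectic map `Ψ_g(p,q) := (p₁+g(p̂), p̂, q₁, q̂ − q₁·∇g(p̂))`, where `p = (p₁,p̂)`,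
`q = (q₁,q̂)`. -/
def PsiMap {m : ℕ} (g : (Fin m → ℝ) → ℝ) :
    (Fin (m + 1) → ℝ) × (Fin (m + 1) → ℝ) → (Fin (m + 1) → ℝ) × (Fin (m + 1) → ℝ) :=
  fun z => (Fin.cons (z.1 0 + g (Fin.tail z.1)) (Fin.tail z.1),
            Fin.cons (z.2 0) fun j => Fin.tail z.2 j - z.2 0 * gradv g (Fin.tail z.1) j)

/-- The translation `j_g(p) := (p₁+g(p̂), p̂)`. -/
def jMap {m : ℕ} (g : (Fin m → ℝ) → ℝ) (p : Fin (m + 1) → ℝ) : Fin (m + 1) → ℝ :=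
  Fin.cons (p 0 + g (Fin.tail p)) (Fin.tail p)

/-- The map `Φ(p,q) := (η(p,q₁), p̂, q₁+ψ(p,q₁), q̂+χ(p,q₁))`. -/
def PhiMap {m : ℕ} (η ψ : (Fin (m + 1) → ℝ) → ℝ → ℝ)
    (χ : (Fin (m + 1) → ℝ) → ℝ → Fin m → ℝ) :
    (Fin (m + 1) → ℝ) × (Fin (m + 1) → ℝ) → (Fin (m + 1) → ℝ) × (Fin (m + 1) → ℝ) :=
  fun z => (Fin.cons (η z.1 (z.2 0)) (Fin.tail z.1),
            Fin.cons (z.2 0 + ψ z.1 (z.2 0)) fun j => Fin.tail z.2 j + χ z.1 (z.2 0) j)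

/-- The map `τ_g Φ (p,q) := (η_g(p,q₁)+g(p̂), p̂, q₁+ψ_g(p,q₁),
q̂+χ_g(p,q₁)−ψ_g(p,q₁)·∇g(p̂))`, where `u_g(p,q₁) := u(p₁−g(p̂), p̂, q₁)`. -/
def tauMap {m : ℕ} (g : (Fin m → ℝ) → ℝ) (η ψ : (Fin (m + 1) → ℝ) → ℝ → ℝ)
    (χ : (Fin (m + 1) → ℝ) → ℝ → Fin m → ℝ) :
    (Fin (m + 1) → ℝ) × (Fin (m + 1) → ℝ) → (Fin (m + 1) → ℝ) × (Fin (m + 1) → ℝ) :=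
  fun z =>
    (Fin.cons (η (jMap (fun x => -g x) z.1) (z.2 0) + g (Fin.tail z.1)) (Fin.tail z.1),
     Fin.cons (z.2 0 + ψ (jMap (fun x => -g x) z.1) (z.2 0)) fun j =>
       Fin.tail z.2 j + χ (jMap (fun x => -g x) z.1) (z.2 0) j
         - ψ (jMap (fun x => -g x) z.1) (z.2 0) * gradv g (Fin.tail z.1) j)

/-- The standard symplectic form `ω(u,v) := ∑ᵢ (u_p ᵢ v_q ᵢ − u_q ᵢ v_p ᵢ)` on `ℝⁿ×ℝⁿ`. -/
def sympForm {m : ℕ} (u v : (Fin (m + 1) → ℝ) × (Fin (m + 1) → ℝ)) : ℝ :=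
  ∑ i, (u.1 i * v.2 i - u.2 i * v.1 i)

/-- A map `F` is symplectic at `z` iff its Jacobian `J` satisfies `Jᵀ𝕁J = 𝕁`, i.e. its
differential preserves the standard symplectic form. -/
def SymplecticAt {m : ℕ}
    (F : (Fin (m + 1) → ℝ) × (Fin (m + 1) → ℝ) → (Fin (m + 1) → ℝ) × (Fin (m + 1) → ℝ))
    (z : (Fin (m + 1) → ℝ) × (Fin (m + 1) → ℝ)) : Prop :=
  ∀ u v, sympForm (fderiv ℝ F z u) (fderiv ℝ F z v) = sympForm u v

section Aux
variable {m : ℕ}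

lemma gradv_neg (g : (Fin m → ℝ) → ℝ) (x : Fin m → ℝ) :
    gradv (fun y => -g y) x = fun j => -(gradv g x j) := by
  funext j; simp [gradv, fderiv_neg]

lemma tauMap_eq_comp (g : (Fin m → ℝ) → ℝ) (η ψ : (Fin (m + 1) → ℝ) → ℝ → ℝ)
    (χ : (Fin (m + 1) → ℝ) → ℝ → Fin m → ℝ)
    (z : (Fin (m + 1) → ℝ) × (Fin (m + 1) → ℝ)) :
    tauMap g η ψ χ z = PsiMap g (PhiMap η ψ χ (PsiMap (fun x => -g x) z)) := by
  simp only [tauMap, PsiMap, PhiMap, jMap, gradv_neg, Fin.tail_cons, Fin.cons_zero]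
  refine Prod.ext rfl ?_
  funext i
  induction i using Fin.cases with
  | zero => simp
  | succ j => simp [Fin.cons_succ]; ring

end Aux

section Aux
open ContinuousLinearMap
variable {m : ℕ}

abbrev EE (m : ℕ) := (Fin (m + 1) → ℝ) × (Fin (m + 1) → ℝ)

/-- continuous linear "tail" map -/
def tailL (m : ℕ) : (Fin (m + 1) → ℝ) →L[ℝ] (Fin m → ℝ) :=
  ContinuousLinearMap.pi fun j => ContinuousLinearMap.proj j.succ

variable (g : (Fin m → ℝ) → ℝ)


lemma hasFDerivAt_c1 (i : Fin (m+1)) (z : EE m) :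
    HasFDerivAt (fun z : EE m => z.1 i)
      ((proj i).comp (fst ℝ (Fin (m+1) → ℝ) (Fin (m+1) → ℝ))) z :=
  ((ContinuousLinearMap.proj (R := ℝ) (φ := fun _ : Fin (m+1) => ℝ) i).comp
    (fst ℝ (Fin (m+1) → ℝ) (Fin (m+1) → ℝ))).hasFDerivAt

lemma hasFDerivAt_c2 (i : Fin (m+1)) (z : EE m) :
    HasFDerivAt (fun z : EE m => z.2 i)
      ((proj i).comp (snd ℝ (Fin (m+1) → ℝ) (Fin (m+1) → ℝ))) z :=
  ((ContinuousLinearMap.proj (R := ℝ) (φ := fun _ : Fin (m+1) => ℝ) i).comp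
    (snd ℝ (Fin (m+1) → ℝ) (Fin (m+1) → ℝ))).hasFDerivAt

lemma hasFDerivAt_tail1 (z : EE m) :
    HasFDerivAt (fun z : EE m => Fin.tail z.1)
      ((tailL m).comp (fst ℝ (Fin (m+1) → ℝ) (Fin (m+1) → ℝ))) z :=
  ((tailL m).comp (fst ℝ (Fin (m+1) → ℝ) (Fin (m+1) → ℝ))).hasFDerivAt

lemma gradv_diff (hg : ContDiff ℝ (⊤ : ℕ∞) g) (j : Fin m) :
    Differentiable ℝ (fun x => gradv g x j) := by
  have h1 : Differentiable ℝ (fderiv ℝ g) := (hg.fderiv_right (WithTop.coe_le_coe.2 (le_top : (1 + 1 : ℕ∞) ≤ ⊤))).differentiable one_ne_zero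
  exact h1.clm_apply (differentiable_const _)

/-- The derivative of `PsiMap g` at `z`. -/
def psiDeriv (z : EE m) : EE m →L[ℝ] EE m :=
  (ContinuousLinearMap.pi
    ((Fin.cons
      ((proj 0).comp (fst ℝ (Fin (m+1) → ℝ) (Fin (m+1) → ℝ)) +
        (fderiv ℝ g (Fin.tail z.1)).comp ((tailL m).comp (fst ℝ _ _)))
      fun j => (proj j.succ).comp (fst ℝ (Fin (m+1) → ℝ) (Fin (m+1) → ℝ))) :
        Fin (m+1) → (EE m →L[ℝ] ℝ))).prod
  (ContinuousLinearMap.pi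
    ((Fin.cons ((proj 0).comp (snd ℝ (Fin (m+1) → ℝ) (Fin (m+1) → ℝ)))
      fun j => (proj j.succ).comp (snd ℝ (Fin (m+1) → ℝ) (Fin (m+1) → ℝ)) -
        (z.2 0 • ((fderiv ℝ (fun x => gradv g x j) (Fin.tail z.1)).comp
            ((tailL m).comp (fst ℝ _ _))) +
          gradv g (Fin.tail z.1) j • ((proj 0).comp (snd ℝ (Fin (m+1) → ℝ) (Fin (m+1) → ℝ))))) :
        Fin (m+1) → (EE m →L[ℝ] ℝ)))

lemma hasFDerivAt_psiMap (hg : ContDiff ℝ (⊤ : ℕ∞) g) (z : EE m) :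
    HasFDerivAt (PsiMap g) (psiDeriv g z) z := by
  apply HasFDerivAt.prodMk
  · apply hasFDerivAt_pi.2
    intro i
    induction i using Fin.cases with
    | zero =>
        simp only [PsiMap, Fin.cons_zero]
        have h1 := hasFDerivAt_c1 0 z
        have h2 : HasFDerivAt (fun z : EE m => g (Fin.tail z.1))
            ((fderiv ℝ g (Fin.tail z.1)).comp ((tailL m).comp (fst ℝ _ _))) z :=
          (hg.differentiable (by simp) (Fin.tail z.1)).hasFDerivAt.comp z
            (hasFDerivAt_tail1 z)
        exact h1.add h2
    | succ j =>
        simp only [PsiMap, Fin.cons_succ]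
        exact hasFDerivAt_c1 j.succ z
  · apply hasFDerivAt_pi.2
    intro i
    induction i using Fin.cases with
    | zero =>
        simp only [PsiMap, Fin.cons_zero]
        exact hasFDerivAt_c2 0 z
    | succ j =>
        simp only [PsiMap, Fin.cons_succ]
        have h1 := hasFDerivAt_c2 j.succ z
        have hc := hasFDerivAt_c2 0 z
        have hd : HasFDerivAt (fun z : EE m => gradv g (Fin.tail z.1) j)
            ((fderiv ℝ (fun x => gradv g x j) (Fin.tail z.1)).comp
              ((tailL m).comp (fst ℝ _ _))) z :=
          by have h := (gradv_diff g hg j (Fin.tail z.1)).hasFDerivAt.comp z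
              (hasFDerivAt_tail1 z); exact h
        exact h1.sub (hc.mul hd)

lemma fderiv_psiMap (hg : ContDiff ℝ (⊤ : ℕ∞) g) (z : EE m) :
    fderiv ℝ (PsiMap g) z = psiDeriv g z :=
  (hasFDerivAt_psiMap g hg z).fderiv

end Aux

section Symp
open ContinuousLinearMap
variable {m : ℕ} (g : (Fin m → ℝ) → ℝ)

lemma tailL_apply (w : Fin (m+1) → ℝ) (j : Fin m) : tailL m w j = w j.succ := rfl

lemma clm_expand (φ : (Fin m → ℝ) →L[ℝ] ℝ) (w : Fin m → ℝ) :
    φ w = ∑ j, w j * φ (Pi.single j 1) := by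
  have h := φ.toLinearMap.pi_apply_eq_sum_univ w
  have hs : ∀ i : Fin m, (fun j => if i = j then (1:ℝ) else 0) = Pi.single i 1 := by
    intro i; funext j; simp [Pi.single_apply, eq_comm]
  simp only [ContinuousLinearMap.coe_coe, smul_eq_mul] at h
  rw [h]
  exact Finset.sum_congr rfl fun i _ => by rw [hs i]

lemma psiMap_symplectic (hg : ContDiff ℝ (⊤ : ℕ∞) g) (z : EE m) :
    SymplecticAt (PsiMap g) z := by
  intro u v
  simp only [fderiv_psiMap g hg z, psiDeriv, sympForm, ContinuousLinearMap.prod_apply,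
    ContinuousLinearMap.pi_apply, Fin.sum_univ_succ, Fin.cons_zero, Fin.cons_succ,
    ContinuousLinearMap.comp_apply, ContinuousLinearMap.add_apply, ContinuousLinearMap.sub_apply,
    ContinuousLinearMap.coe_smul', Pi.smul_apply, ContinuousLinearMap.proj_apply,
    ContinuousLinearMap.coe_fst', ContinuousLinearMap.coe_snd', smul_eq_mul]
  set xh := Fin.tail z.1 with hx
  have hC : DifferentiableAt ℝ (fderiv ℝ g) xh :=
    (hg.fderiv_right (WithTop.coe_le_coe.2 (le_top : (1 + 1 : ℕ∞) ≤ ⊤))).differentiable one_ne_zero xh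
  -- second derivative
  set H := fderiv ℝ (fderiv ℝ g) xh with hH
  have hHsymm : ∀ a b, H a b = H b a := fun a b =>
    second_derivative_symmetric (fun y => (hg.differentiable (by simp) y).hasFDerivAt)
      hC.hasFDerivAt a b
  have hDj : ∀ (j : Fin m) (a : Fin m → ℝ),
      fderiv ℝ (fun x => gradv g x j) xh a = H a (Pi.single j 1) := by
    intro j a
    have h := fderiv_clm_apply (c := fderiv ℝ g) (u := fun _ => Pi.single j (1:ℝ)) hC
      (differentiableAt_const _)
    rw [show (fun x => gradv g x j) = (fun x => fderiv ℝ g x (Pi.single j 1)) from rfl, h]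
    simp [hH]
  have e1 : (fderiv ℝ g xh) (tailL m u.1) = ∑ j, u.1 j.succ * gradv g xh j := by
    rw [clm_expand]; rfl
  have e2 : (fderiv ℝ g xh) (tailL m v.1) = ∑ j, v.1 j.succ * gradv g xh j := by
    rw [clm_expand]; rfl
  have e3 : ∑ j, u.1 j.succ * (fderiv ℝ (fun x => gradv g x j) xh) (tailL m v.1)
      = ∑ j, v.1 j.succ * (fderiv ℝ (fun x => gradv g x j) xh) (tailL m u.1) := by
    have h1 : ∑ j, u.1 j.succ * (fderiv ℝ (fun x => gradv g x j) xh) (tailL m v.1)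
        = H (tailL m v.1) (tailL m u.1) := by
      rw [clm_expand (H (tailL m v.1)) (tailL m u.1)]
      exact Finset.sum_congr rfl fun j _ => by rw [hDj, tailL_apply]
    have h2 : ∑ j, v.1 j.succ * (fderiv ℝ (fun x => gradv g x j) xh) (tailL m u.1)
        = H (tailL m u.1) (tailL m v.1) := by
      rw [clm_expand (H (tailL m u.1)) (tailL m v.1)]
      exact Finset.sum_congr rfl fun j _ => by rw [hDj, tailL_apply]
    rw [h1, h2, hHsymm]
  rw [e1, e2]
  have hmain : ∀ j : Fin m,
      u.1 j.succ * (v.2 j.succ -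
          (z.2 0 * (fderiv ℝ (fun x => gradv g x j) xh) (tailL m v.1) + gradv g xh j * v.2 0)) -
        (u.2 j.succ -
          (z.2 0 * (fderiv ℝ (fun x => gradv g x j) xh) (tailL m u.1) + gradv g xh j * u.2 0)) *
          v.1 j.succ
      = (u.1 j.succ * v.2 j.succ - u.2 j.succ * v.1 j.succ)
        - z.2 0 * (u.1 j.succ * (fderiv ℝ (fun x => gradv g x j) xh) (tailL m v.1))
        + z.2 0 * (v.1 j.succ * (fderiv ℝ (fun x => gradv g x j) xh) (tailL m u.1))
        - (u.1 j.succ * gradv g xh j) * v.2 0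
        + u.2 0 * (v.1 j.succ * gradv g xh j) := by
    intro j; ring
  rw [Finset.sum_congr rfl fun j _ => hmain j]
  simp only [Finset.sum_add_distrib, Finset.sum_sub_distrib, ← Finset.mul_sum,
    ← Finset.sum_mul]
  rw [e3]
  ring
end Symp

section Comp
open ContinuousLinearMap
variable {m : ℕ}

lemma symplecticAt_comp {F G : EE m → EE m} {z : EE m}
    (hG : DifferentiableAt ℝ G z) (hF : DifferentiableAt ℝ F (G z))
    (sF : SymplecticAt F (G z)) (sG : SymplecticAt G z) :
    SymplecticAt (fun w => F (G w)) z := by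
  intro u v
  have hcomp : fderiv ℝ (fun w => F (G w)) z = (fderiv ℝ F (G z)).comp (fderiv ℝ G z) :=
    fderiv_comp z hF hG
  rw [hcomp]
  simp only [ContinuousLinearMap.comp_apply]
  rw [sF, sG]

lemma phiMap_differentiableAt (D : Set (Fin (m + 1) → ℝ)) (hD : IsOpen D)
    (η ψ : (Fin (m + 1) → ℝ) → ℝ → ℝ) (χ : (Fin (m + 1) → ℝ) → ℝ → Fin m → ℝ)
    (hη : ContDiffOn ℝ (⊤ : ℕ∞) (fun z : (Fin (m + 1) → ℝ) × ℝ => η z.1 z.2) (D ×ˢ (Set.univ : Set ℝ)))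
    (hψ : ContDiffOn ℝ (⊤ : ℕ∞) (fun z : (Fin (m + 1) → ℝ) × ℝ => ψ z.1 z.2) (D ×ˢ (Set.univ : Set ℝ)))
    (hχ : ContDiffOn ℝ (⊤ : ℕ∞) (fun z : (Fin (m + 1) → ℝ) × ℝ => χ z.1 z.2) (D ×ˢ (Set.univ : Set ℝ)))
    (w : EE m) (hw : w.1 ∈ D) :
    DifferentiableAt ℝ (PhiMap η ψ χ) w := by
  have hmem : (w.1, w.2 0) ∈ D ×ˢ (Set.univ : Set ℝ) := ⟨hw, Set.mem_univ _⟩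
  have hopen : IsOpen (D ×ˢ (Set.univ : Set ℝ)) := hD.prod isOpen_univ
  have hnhds : D ×ˢ (Set.univ : Set ℝ) ∈ nhds (w.1, w.2 0) := hopen.mem_nhds hmem
  have hproj : DifferentiableAt ℝ (fun z : EE m => (z.1, z.2 0)) w :=
    differentiableAt_fst.prodMk ((hasFDerivAt_c2 0 w).differentiableAt)
  have hη' : DifferentiableAt ℝ (fun z : EE m => η z.1 (z.2 0)) w :=
    by have h := ((hη.contDiffAt hnhds).differentiableAt (by simp)).comp w hproj; exact h
  have hψ' : DifferentiableAt ℝ (fun z : EE m => ψ z.1 (z.2 0)) w :=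
    by have h := ((hψ.contDiffAt hnhds).differentiableAt (by simp)).comp w hproj; exact h
  have hχ' : ∀ j, DifferentiableAt ℝ (fun z : EE m => χ z.1 (z.2 0) j) w := by
    intro j
    have := (((hχ.contDiffAt hnhds).differentiableAt (by simp)).comp w hproj)
    exact (differentiableAt_pi.1 this) j
  apply DifferentiableAt.prodMk
  · apply differentiableAt_pi.2
    intro i
    induction i using Fin.cases with
    | zero => simpa [PhiMap, Fin.cons_zero] using hη'
    | succ j =>
        simp only [PhiMap, Fin.cons_succ]
        exact (hasFDerivAt_c1 j.succ w).differentiableAt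
  · apply differentiableAt_pi.2
    intro i
    induction i using Fin.cases with
    | zero =>
        simp only [PhiMap, Fin.cons_zero]
        exact ((hasFDerivAt_c2 0 w).differentiableAt).add hψ'
    | succ j =>
        simp only [PhiMap, Fin.cons_succ]
        exact ((hasFDerivAt_c2 j.succ w).differentiableAt).add (hχ' j)
end Comp

/-- With `n = m+1 ≥ 2`, `D ⊆ ℝⁿ` open, `g` smooth, and `η, ψ, χ` smooth on
`D×ℝ` and `2π`-periodic in `q₁`: `τ_gΦ = Ψ_g ∘ Φ ∘ Ψ_{−g}` on `j_g(D)×ℝⁿ`; the first `n+1`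
components of `τ_gΦ` depend only on `(p,q₁)` and equal `(η_g+g, p̂, q₁+ψ_g)`; and if `Φ` is
symplectic on `D×ℝⁿ` then `τ_gΦ` is symplectic on `j_g(D)×ℝⁿ`. -/
theorem tauMap_conjugation {m : ℕ} (hm : 1 ≤ m)
    (D : Set (Fin (m + 1) → ℝ)) (hD : IsOpen D)
    (g : (Fin m → ℝ) → ℝ) (hg : ContDiff ℝ (⊤ : ℕ∞) g)
    (η ψ : (Fin (m + 1) → ℝ) → ℝ → ℝ) (χ : (Fin (m + 1) → ℝ) → ℝ → Fin m → ℝ)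
    (hη : ContDiffOn ℝ (⊤ : ℕ∞) (fun z : (Fin (m + 1) → ℝ) × ℝ => η z.1 z.2)
      (D ×ˢ (Set.univ : Set ℝ)))
    (hψ : ContDiffOn ℝ (⊤ : ℕ∞) (fun z : (Fin (m + 1) → ℝ) × ℝ => ψ z.1 z.2)
      (D ×ˢ (Set.univ : Set ℝ)))
    (hχ : ContDiffOn ℝ (⊤ : ℕ∞) (fun z : (Fin (m + 1) → ℝ) × ℝ => χ z.1 z.2)
      (D ×ˢ (Set.univ : Set ℝ)))
    (hηper : ∀ p q₁, η p (q₁ + 2 * π) = η p q₁)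
    (hψper : ∀ p q₁, ψ p (q₁ + 2 * π) = ψ p q₁)
    (hχper : ∀ p q₁, χ p (q₁ + 2 * π) = χ p q₁) :
    (∀ z : (Fin (m + 1) → ℝ) × (Fin (m + 1) → ℝ), z.1 ∈ jMap g '' D →
      tauMap g η ψ χ z = PsiMap g (PhiMap η ψ χ (PsiMap (fun x => -g x) z))) ∧
    (∀ z z' : (Fin (m + 1) → ℝ) × (Fin (m + 1) → ℝ), z.1 = z'.1 → z.2 0 = z'.2 0 →
      (tauMap g η ψ χ z).1 = (tauMap g η ψ χ z').1 ∧
        (tauMap g η ψ χ z).2 0 = (tauMap g η ψ χ z').2 0) ∧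
    (∀ z : (Fin (m + 1) → ℝ) × (Fin (m + 1) → ℝ),
      (tauMap g η ψ χ z).1
          = Fin.cons (η (jMap (fun x => -g x) z.1) (z.2 0) + g (Fin.tail z.1))
              (Fin.tail z.1) ∧
        (tauMap g η ψ χ z).2 0 = z.2 0 + ψ (jMap (fun x => -g x) z.1) (z.2 0)) ∧
    ((∀ z : (Fin (m + 1) → ℝ) × (Fin (m + 1) → ℝ), z.1 ∈ D →
        SymplecticAt (PhiMap η ψ χ) z) →
      ∀ z : (Fin (m + 1) → ℝ) × (Fin (m + 1) → ℝ), z.1 ∈ jMap g '' D →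
        SymplecticAt (tauMap g η ψ χ) z) := by
  refine ⟨?_, ?_, ?_, ?_⟩
  · intro z _
    exact tauMap_eq_comp g η ψ χ z
  · intro z z' h1 h2
    exact ⟨by simp only [tauMap, h1, h2], by simp only [tauMap, h1, h2, Fin.cons_zero]⟩
  · intro z
    exact ⟨rfl, by simp [tauMap]⟩
  · intro hsymp z hz
    obtain ⟨p, hpD, hpz⟩ := hz
    have hfun : tauMap g η ψ χ
        = fun w => PsiMap g (PhiMap η ψ χ (PsiMap (fun x => -g x) w)) :=
      funext fun w => tauMap_eq_comp g η ψ χ w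
    rw [hfun]
    have hgneg : ContDiff ℝ (⊤ : ℕ∞) (fun x => -g x) := hg.neg
    set w := PsiMap (fun x => -g x) z with hwdef
    have hw1 : w.1 = p := by
      rw [hwdef]
      simp only [PsiMap, ← hpz, jMap, Fin.tail_cons, Fin.cons_zero]
      rw [show p 0 + g (Fin.tail p) + -g (Fin.tail p) = p 0 by ring]
      exact Fin.cons_self_tail p
    have hwD : w.1 ∈ D := hw1 ▸ hpD
    have d1 : DifferentiableAt ℝ (PsiMap (fun x => -g x)) z :=
      (hasFDerivAt_psiMap _ hgneg z).differentiableAt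
    have d2 : DifferentiableAt ℝ (PhiMap η ψ χ) w :=
      phiMap_differentiableAt D hD η ψ χ hη hψ hχ w hwD
    have d3 : DifferentiableAt ℝ (PsiMap g) (PhiMap η ψ χ w) :=
      (hasFDerivAt_psiMap g hg _).differentiableAt
    have sG : SymplecticAt (fun w' => PhiMap η ψ χ (PsiMap (fun x => -g x) w')) z :=
      symplecticAt_comp d1 d2 (hsymp w hwD) (psiMap_symplectic _ hgneg z)
    have dG : DifferentiableAt ℝ (fun w' => PhiMap η ψ χ (PsiMap (fun x => -g x) w')) z :=
      by have h := d2.comp z d1; exact h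
    exact symplecticAt_comp dG d3 (psiMap_symplectic g hg _) sG


end
end
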